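/- arXiv:2510.06032 — 8 statements merged into one kernel-verified Lean document; each statement's English description precedes it below -/
import Mathlib

section
/- For every integer n ≥ 1, the identity ∑_{i=0}^{n} C(n, i) · |n/2 − i| = n · C(n − 1, ⌊(n − 1)/2⌋) holds, where C(n, i) denotes the binomial coefficient and the absolute values are taken in ℝ. -/
/-- For every integer `n ≥ 1`,
`∑_{i=0}^{n} C(n, i) · |n/2 − i| = n · C(n − 1, ⌊(n − 1)/2⌋)`. -/
theorem sum_choose_mul_abs (n : ℕ) (hn : 1 ≤ n) :
    ∑ i ∈ Finset.range (n + 1), (n.choose i : ℝ) * |(n : ℝ) / 2 - (i : ℝ)|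
      = (n : ℝ) * ((n - 1).choose ((n - 1) / 2) : ℝ) := by
  obtain ⟨k, rfl⟩ : ∃ k, n = k + 1 := ⟨n - 1, by omega⟩
  set g : ℕ → ℝ := fun i => ((k.choose i : ℕ) : ℝ) with hg
  have key : ∀ j : ℕ, (((k+1).choose (j+1) : ℕ) : ℝ) * (((k+1 : ℕ) : ℝ)/2 - ((j+1 : ℕ) : ℝ)) =
      (((k+1 : ℕ) : ℝ))/2 * (g (j+1) - g j) := by
    intro j
    have h1n : (k+1) * k.choose j = (k+1).choose (j+1) * (j+1) := Nat.add_one_mul_choose_eq k j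
    have h2n : (k+1).choose (j+1) = k.choose j + k.choose (j+1) := Nat.choose_succ_succ k j
    have h1 : ((k:ℝ)+1) * (k.choose j : ℝ) = ((k+1).choose (j+1) : ℝ) * ((j:ℝ)+1) := by
      exact_mod_cast h1n
    have h2 : (((k+1).choose (j+1) : ℕ) : ℝ) = (k.choose j : ℝ) + (k.choose (j+1) : ℝ) := by
      exact_mod_cast h2n
    simp only [hg]
    push_cast
    linear_combination ((k:ℝ)+1)/2 * h2 + h1
  set m := (k+1) / 2 with hm
  have hmn : m ≤ k + 1 := Nat.div_le_self _ _
  rw [← Finset.sum_range_add_sum_Ico _ (by omega : m + 1 ≤ (k+1) + 1)]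
  have hA : ∑ i ∈ Finset.range (m + 1), (((k+1).choose i : ℕ) : ℝ) * |((k+1 : ℕ) : ℝ) / 2 - (i : ℝ)|
      = (((k+1:ℕ)) : ℝ)/2 * g m := by
    have habs : ∀ i ∈ Finset.range (m + 1),
        (((k+1).choose i : ℕ) : ℝ) * |((k+1:ℕ) : ℝ) / 2 - (i : ℝ)|
          = (((k+1).choose i : ℕ) : ℝ) * (((k+1:ℕ) : ℝ) / 2 - (i : ℝ)) := by
      intro i hi
      rw [Finset.mem_range] at hi
      rw [abs_of_nonneg]
      have h2i : (2 * i : ℕ) ≤ k + 1 := by omega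
      have := (Nat.cast_le (α := ℝ)).mpr h2i
      push_cast at this ⊢
      linarith
    rw [Finset.sum_congr rfl habs, Finset.sum_range_succ']
    have hstep : ∀ i ∈ Finset.range m,
        (((k+1).choose (i+1) : ℕ) : ℝ) * (((k+1:ℕ) : ℝ)/2 - ((i+1 : ℕ) : ℝ))
          = ((k+1:ℕ) : ℝ)/2 * g (i+1) - ((k+1:ℕ) : ℝ)/2 * g i := by
      intro i _
      have := key i
      linarith [this]
    rw [Finset.sum_congr rfl hstep, Finset.sum_range_sub (fun i => ((k+1:ℕ) : ℝ)/2 * g i)]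
    have hg0 : g 0 = 1 := by simp [hg]
    rw [hg0]
    simp
  have hB : ∑ i ∈ Finset.Ico (m + 1) ((k+1) + 1), (((k+1).choose i : ℕ) : ℝ) * |((k+1:ℕ) : ℝ) / 2 - (i : ℝ)|
      = ((k+1:ℕ) : ℝ)/2 * g m := by
    have habs : ∀ i ∈ Finset.Ico (m + 1) ((k+1) + 1),
        (((k+1).choose i : ℕ) : ℝ) * |((k+1:ℕ) : ℝ) / 2 - (i : ℝ)|
          = (((k+1).choose i : ℕ) : ℝ) * ((i : ℝ) - ((k+1:ℕ) : ℝ) / 2) := by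
      intro i hi
      rw [Finset.mem_Ico] at hi
      rw [abs_sub_comm, abs_of_nonneg]
      have h2i : (k + 1 : ℕ) ≤ 2 * i := by omega
      have := (Nat.cast_le (α := ℝ)).mpr h2i
      push_cast at this ⊢
      linarith
    rw [Finset.sum_congr rfl habs, Finset.sum_Ico_eq_sum_range]
    have hlen : (k+1) + 1 - (m + 1) = k + 1 - m := by omega
    rw [hlen]
    have hstep : ∀ i ∈ Finset.range (k + 1 - m),
        (((k+1).choose (m + 1 + i) : ℕ) : ℝ) * (((m + 1 + i : ℕ) : ℝ) - ((k+1:ℕ) : ℝ)/2)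
          = ((k+1:ℕ) : ℝ)/2 * g (m + i) - ((k+1:ℕ) : ℝ)/2 * g (m + (i + 1)) := by
      intro i _
      have harr : m + 1 + i = (m + i) + 1 := by omega
      rw [harr]
      have := key (m + i)
      have harr2 : m + (i + 1) = (m + i) + 1 := by omega
      rw [harr2]
      linarith [this]
    rw [Finset.sum_congr rfl hstep,
      Finset.sum_range_sub' (fun i => ((k+1:ℕ) : ℝ)/2 * g (m + i))]
    have hgn : g (m + (k + 1 - m)) = 0 := by
      have hx : m + (k + 1 - m) = k + 1 := by omega
      rw [hx, hg]
      simp [Nat.choose_eq_zero_of_lt (by omega : k < k + 1)]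
    rw [hgn]
    simp
  rw [hA, hB]
  have hidx : (k + 1 - 1 : ℕ) = k := by omega
  rw [hidx]
  have hsym : k.choose m = k.choose (k / 2) := by
    rcases (by omega : k - m = k / 2 ∨ m = k / 2) with h | h
    · rw [← h, Nat.choose_symm (by omega : m ≤ k)]
    · rw [h]
  simp only [hg]
  rw [← hsym]
  push_cast
  ring
end

section
/- For every even integer n ≥ 2, the identity ∑_{i=0}^{n} C(n, i) · |n/2 − i|^3 = n! / ((n/2 − 1)!)^2 holds, where C(n, i) denotes the binomial coefficient and the absolute values are taken in ℝ. -/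
open Finset

private lemma key_id (n : ℕ) (hn : 1 ≤ n) (i : ℕ) :
    ((n : ℤ) - 2 * i) * n.choose i
      = n * ((n - 1).choose i - if i = 0 then 0 else ((n - 1).choose (i - 1) : ℤ)) := by
  obtain ⟨s, rfl⟩ : ∃ s, n = s + 1 := ⟨n - 1, by omega⟩
  cases i with
  | zero => simp
  | succ k =>
    simp only [Nat.add_sub_cancel, Nat.succ_sub_one, if_neg (Nat.succ_ne_zero k)]
    have pascal : ((s + 1).choose (k + 1) : ℤ) = s.choose k + s.choose (k + 1) := by
      exact_mod_cast Nat.choose_succ_succ s k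
    rcases le_or_gt k s with h | h
    · have h3 : (s.choose (k + 1) : ℤ) * (k + 1) = s.choose k * ((s : ℤ) - k) := by
        have h0 := Nat.choose_succ_right_eq s k
        have h1 : (s.choose (k + 1) : ℤ) * (k + 1) = (s.choose k : ℤ) * ((s - k : ℕ) : ℤ) := by
          exact_mod_cast h0
        rwa [Nat.cast_sub h] at h1
      push_cast
      linear_combination ((s : ℤ) + 1 - 2 * (k + 1)) * pascal - 2 * h3
    · have h1 : s.choose (k + 1) = 0 := Nat.choose_eq_zero_of_lt (by omega)
      have h2 : s.choose k = 0 := Nat.choose_eq_zero_of_lt h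
      have h3 : (s + 1).choose (k + 1) = 0 := Nat.choose_eq_zero_of_lt (by omega)
      simp [h1, h2, h3]

private lemma core (m : ℕ) (hm : 1 ≤ m) :
    ∑ i ∈ range m, ((m : ℤ) - i) ^ 3 * ((2 * m).choose i : ℤ)
      = m * (2 * m - 1) * ((2 * m - 2).choose (m - 1) : ℤ) := by
  set D : ℕ → ℤ := fun j => if j = 0 then 0 else ((2 * m - 1).choose (j - 1) : ℤ) with hD
  set E : ℕ → ℤ := fun j => if j = 0 then 0 else ((2 * m - 2).choose (j - 1) : ℤ) with hE
  have hkeyD : ∀ i : ℕ, ((m : ℤ) - i) * ((2 * m).choose i : ℤ) = m * (D (i + 1) - D i) := by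
    intro i
    have h := key_id (2 * m) (by omega) i
    have hc : ((2 * m : ℕ) : ℤ) = 2 * m := by push_cast; ring
    have hD1 : D (i + 1) = ((2 * m - 1).choose i : ℤ) := by simp [hD]
    rw [hc] at h
    have h2 : (2 : ℤ) * (((m : ℤ) - i) * ((2 * m).choose i : ℤ))
        = 2 * ((m : ℤ) * (D (i + 1) - D i)) := by
      rw [hD1]
      simp only [hD]
      linear_combination h
    exact mul_left_cancel₀ (two_ne_zero) h2
  have hkeyE : ∀ i : ℕ, (2 * ((m : ℤ) - i) - 1) * ((2 * m - 1).choose i : ℤ)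
      = (2 * m - 1) * (E (i + 1) - E i) := by
    intro i
    have h := key_id (2 * m - 1) (by omega) i
    have hc : ((2 * m - 1 : ℕ) : ℤ) = 2 * m - 1 := by
      have h1 : (1:ℕ) ≤ 2 * m := by omega
      push_cast [Nat.cast_sub h1]; ring
    have hc2 : (2 * m - 1 - 1 : ℕ) = 2 * m - 2 := by omega
    rw [hc, hc2] at h
    have hE1 : E (i + 1) = ((2 * m - 2).choose i : ℤ) := by simp [hE]
    rw [hE1]
    simp only [hE]
    linear_combination h
  have step1 : ∑ i ∈ range m, ((m : ℤ) - i) ^ 3 * ((2 * m).choose i : ℤ)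
      = ∑ i ∈ range m, ((m : ℤ) * ((2 * ((m : ℤ) - i) - 1) * D (i + 1))
          + (m : ℤ) * ((((m : ℤ) - (i + 1)) ^ 2 * D (i + 1)) - (((m : ℤ) - i) ^ 2 * D i))) := by
    refine Finset.sum_congr rfl fun i _ => ?_
    have h := hkeyD i
    calc ((m : ℤ) - i) ^ 3 * ((2 * m).choose i : ℤ)
        = ((m : ℤ) - i) ^ 2 * (((m : ℤ) - i) * ((2 * m).choose i : ℤ)) := by ring
      _ = ((m : ℤ) - i) ^ 2 * ((m : ℤ) * (D (i + 1) - D i)) := by rw [h]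
      _ = _ := by ring
  rw [step1, Finset.sum_add_distrib, ← Finset.mul_sum, ← Finset.mul_sum]
  have tel2 : ∑ i ∈ range m, ((((m : ℤ) - (i + 1)) ^ 2 * D (i + 1)) - (((m : ℤ) - i) ^ 2 * D i))
      = 0 := by
    have h := Finset.sum_range_sub (fun j => ((m : ℤ) - j) ^ 2 * D j) m
    simp only [Nat.cast_add, Nat.cast_one] at h ⊢
    rw [h]
    simp [hD, sub_self]
  have step3 : ∑ i ∈ range m, ((2 * ((m : ℤ) - i) - 1) * D (i + 1))
      = (2 * (m : ℤ) - 1) * ((2 * m - 2).choose (m - 1) : ℤ) := by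
    have h1 : ∀ i ∈ range m, (2 * ((m : ℤ) - i) - 1) * D (i + 1)
        = (2 * (m : ℤ) - 1) * (E (i + 1) - E i) := by
      intro i _
      have hD1 : D (i + 1) = ((2 * m - 1).choose i : ℤ) := by simp [hD]
      rw [hD1]; exact hkeyE i
    rw [Finset.sum_congr rfl h1, ← Finset.mul_sum, Finset.sum_range_sub (fun j => E j) m]
    have hm0 : m ≠ 0 := by omega
    simp [hE, hm0]
  rw [tel2, step3]
  ring

/-- For every even integer `n ≥ 2`,
`∑_{i=0}^{n} C(n, i) · |n/2 − i|^3 = n! / ((n/2 − 1)!)^2`. -/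
theorem sum_choose_mul_abs_cube_even (n : ℕ) (hn : 2 ≤ n) (heven : Even n) :
    ∑ i ∈ Finset.range (n + 1), (n.choose i : ℝ) * |(n : ℝ) / 2 - (i : ℝ)| ^ 3
      = (n.factorial : ℝ) / ((n / 2 - 1).factorial : ℝ) ^ 2 := by
  obtain ⟨m, hm⟩ : ∃ m, n = 2 * m := by
    obtain ⟨k, hk⟩ := heven; exact ⟨k, by omega⟩
  subst hm
  have hm1 : 1 ≤ m := by omega
  have hhalf : 2 * m / 2 = m := by omega
  rw [hhalf]
  have hmc : ((2 * m : ℕ) : ℝ) / 2 = (m : ℝ) := by push_cast; ring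
  simp only [hmc]
  set A : ℝ := ∑ i ∈ range m, ((2 * m).choose (m - 1 - i) : ℝ) * ((i : ℝ) + 1) ^ 3 with hA
  have refl3 : ∑ j ∈ range m,
        ((2 * m).choose (m - 1 - (m - 1 - j)) : ℝ) * (((m - 1 - j : ℕ) : ℝ) + 1) ^ 3 = A :=
    Finset.sum_range_reflect (fun j => ((2 * m).choose (m - 1 - j) : ℝ) * ((j : ℝ) + 1) ^ 3) m
  have hcastsub : ∀ i : ℕ, i < m → ((m - 1 - i : ℕ) : ℝ) = (m : ℝ) - 1 - i := by
    intro i hi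
    have h1 : i ≤ m - 1 := by omega
    push_cast [Nat.cast_sub h1, Nat.cast_sub (show 1 ≤ m by omega)]
    ring
  have hidem : ∀ i : ℕ, i < m → m - 1 - (m - 1 - i) = i := by intro i hi; omega
  have first : ∀ f : ℕ → ℝ, (∀ i, i < m → f i = ((2 * m).choose i : ℝ) * ((m : ℝ) - i) ^ 3) →
      ∑ i ∈ range m, f i = A := by
    intro f hf
    rw [← refl3]
    refine Finset.sum_congr rfl fun i hi => ?_
    have hi' : i < m := Finset.mem_range.mp hi
    rw [hf i hi', hidem i hi', hcastsub i hi']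
    ring
  -- split the full sum
  have hsplit : ∑ i ∈ Finset.range (2 * m + 1),
      ((2 * m).choose i : ℝ) * |(m : ℝ) - (i : ℝ)| ^ 3 = 2 * A := by
    have hr : 2 * m + 1 = m + (m + 1) := by omega
    rw [hr, Finset.sum_range_add]
    have c1 : ∑ i ∈ range m, ((2 * m).choose i : ℝ) * |(m : ℝ) - (i : ℝ)| ^ 3 = A := by
      apply first
      intro i hi
      have hle : (i : ℝ) ≤ m := by exact_mod_cast hi.le
      rw [abs_of_nonneg (by linarith)]
    have c2 : ∑ i ∈ range (m + 1),
        ((2 * m).choose (m + i) : ℝ) * |(m : ℝ) - ((m + i : ℕ) : ℝ)| ^ 3 = A := by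
      rw [Finset.sum_range_succ']
      have hz : ((2 * m).choose (m + 0) : ℝ) * |(m : ℝ) - ((m + 0 : ℕ) : ℝ)| ^ 3 = 0 := by
        have h0 : (m : ℝ) - ((m + 0 : ℕ) : ℝ) = 0 := by push_cast; ring
        rw [h0]; simp
      rw [hz, add_zero, hA]
      refine Finset.sum_congr rfl fun i hi => ?_
      have hi' : i < m := Finset.mem_range.mp hi
      have hsym : (2 * m).choose (m + (i + 1)) = (2 * m).choose (m - 1 - i) := by
        have h := Nat.choose_symm (show m + (i + 1) ≤ 2 * m by omega)
        have he : 2 * m - (m + (i + 1)) = m - 1 - i := by omega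
        rw [he] at h
        exact h.symm
      have habs2 : |(m : ℝ) - ((m + (i + 1) : ℕ) : ℝ)| = (i : ℝ) + 1 := by
        have he : (m : ℝ) - ((m + (i + 1) : ℕ) : ℝ) = -((i : ℝ) + 1) := by push_cast; ring
        rw [he, abs_neg, abs_of_nonneg (by positivity)]
      rw [hsym, habs2]
    rw [c1, c2]; ring
  rw [hsplit]
  -- evaluate A via the integer identity
  have hAval : A = (m : ℝ) * (2 * (m : ℝ) - 1) * ((2 * m - 2).choose (m - 1) : ℝ) := by
    have hA2 : ∑ i ∈ range m, ((2 * m).choose i : ℝ) * ((m : ℝ) - i) ^ 3 = A :=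
      first _ (fun i _ => rfl)
    rw [← hA2]
    have hcore := core m hm1
    have hcast : ∑ i ∈ range m, ((m : ℝ) - i) ^ 3 * ((2 * m).choose i : ℝ)
        = (m : ℝ) * (2 * (m : ℝ) - 1) * ((2 * m - 2).choose (m - 1) : ℝ) := by
      exact_mod_cast hcore
    rw [← hcast]
    exact Finset.sum_congr rfl fun i _ => by ring
  rw [hAval, eq_div_iff (by positivity)]
  -- factorial arithmetic
  have hfac : (2 * m).factorial = 2 * m * (2 * m - 1) * (2 * m - 2).factorial := by
    have h1 : 2 * m = (2 * m - 1) + 1 := by omega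
    have h2 : 2 * m - 1 = (2 * m - 2) + 1 := by omega
    calc (2 * m).factorial = ((2 * m - 1) + 1).factorial := by rw [← h1]
      _ = ((2 * m - 1) + 1) * (2 * m - 1).factorial := Nat.factorial_succ _
      _ = ((2 * m - 1) + 1) * (((2 * m - 2) + 1) * (2 * m - 2).factorial) := by
          rw [h2, Nat.factorial_succ, ← h2]
      _ = 2 * m * (2 * m - 1) * (2 * m - 2).factorial := by rw [← h1, ← h2]; ring
  have hch : ((2 * m - 2).choose (m - 1)) * (m - 1).factorial * (m - 1).factorial
      = (2 * m - 2).factorial := by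
    have hle : m - 1 ≤ 2 * m - 2 := by omega
    have h := Nat.choose_mul_factorial_mul_factorial hle
    have heq : 2 * m - 2 - (m - 1) = m - 1 := by omega
    rwa [heq] at h
  have hN : (2 * m).factorial
      = 2 * m * (2 * m - 1) * ((2 * m - 2).choose (m - 1) * (m - 1).factorial * (m - 1).factorial) := by
    rw [hfac, hch]
  have hr1 : ((2 * m - 1 : ℕ) : ℝ) = 2 * (m : ℝ) - 1 := by
    push_cast [Nat.cast_sub (show 1 ≤ 2 * m by omega)]; ring
  have hrfac : ((2 * m).factorial : ℝ)
      = 2 * m * (2 * (m : ℝ) - 1)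
        * (((2 * m - 2).choose (m - 1) : ℝ) * ((m - 1).factorial : ℝ) * ((m - 1).factorial : ℝ)) := by
    rw [hN]
    push_cast [hr1]
    ring
  rw [hrfac]
  ring
end

section
/- For every odd integer n ≥ 1, the identity ∑_{i=0}^{n} C(n, i) · |n/2 − i|^3 = n! · (2n − 1) / (4 · (((n − 1)/2)!)^2) holds, where C(n, i) denotes the binomial coefficient and the absolute values are taken in ℝ. -/
open Finset

/-- Real-valued version of the choose recurrence. -/
lemma choose_real (n i : ℕ) :
    ((n.choose (i + 1) : ℝ)) * (i + 1) = (n.choose i : ℝ) * ((n : ℝ) - i) := by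
  rcases le_or_gt (i + 1) n with h | h
  · have := Nat.choose_succ_right_eq n i
    have hc := congrArg (fun x : ℕ => (x : ℝ)) this
    push_cast [Nat.cast_sub (by omega : i ≤ n)] at hc
    exact_mod_cast hc
  · rcases eq_or_lt_of_le (by omega : n ≤ i) with h2 | h2
    · subst h2
      simp [Nat.choose_succ_self]
    · rw [Nat.choose_eq_zero_of_lt (by omega), Nat.choose_eq_zero_of_lt h2]
      simp

/-- The telescoping function. -/
noncomputable def gfun (n : ℕ) : ℕ → ℝ := fun i =>
  (n.choose i : ℝ) * (4 * (i:ℝ)^3 - (4 * n + 4) * (i:ℝ)^2 + ((n:ℝ)^2 + 4 * n) * i)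

lemma gfun_step (n i : ℕ) :
    gfun n (i + 1) - gfun n i = ((n:ℝ) - 2 * i)^3 * (n.choose i : ℝ) := by
  have h := choose_real n i
  have hi : ((i : ℝ) + 1) ≠ 0 := by positivity
  have key : (gfun n (i + 1) - gfun n i) * ((i:ℝ) + 1)
      = ((n:ℝ) - 2 * i)^3 * (n.choose i : ℝ) * ((i:ℝ) + 1) := by
    unfold gfun
    push_cast
    linear_combination (4 * ((i:ℝ)+1)^3 - (4*(n:ℝ)+4) * ((i:ℝ)+1)^2 + ((n:ℝ)^2+4*(n:ℝ)) * ((i:ℝ)+1)) * h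
  exact mul_right_cancel₀ hi key

lemma gfun_sum (n k : ℕ) :
    ∑ i ∈ range k, ((n:ℝ) - 2 * i)^3 * (n.choose i : ℝ) = gfun n k := by
  induction k with
  | zero => simp [gfun]
  | succ k ih =>
      rw [Finset.sum_range_succ, ih, ← gfun_step n k]
      ring

/-- For every odd integer `n ≥ 1`,
`∑_{i=0}^{n} C(n, i) · |n/2 − i|^3 = n! · (2n − 1) / (4 · (((n − 1)/2)!)^2)`. -/
theorem sum_choose_mul_abs_cube_odd (n : ℕ) (hn : 1 ≤ n) (hodd : Odd n) :
    ∑ i ∈ Finset.range (n + 1), (n.choose i : ℝ) * |(n : ℝ) / 2 - (i : ℝ)| ^ 3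
      = (n.factorial : ℝ) * (2 * (n : ℝ) - 1) / (4 * (((n - 1) / 2).factorial : ℝ) ^ 2) := by
  obtain ⟨m, rfl⟩ := hodd
  set n := 2 * m + 1 with hn'
  have hsplit : (n + 1) = (m + 1) + (m + 1) := by omega
  rw [hsplit, Finset.sum_range_add]
  -- reflect the second half
  have hrefl : ∑ i ∈ range (m + 1),
      ((n.choose (m + 1 + i) : ℝ) * |(n : ℝ) / 2 - ((m + 1 + i : ℕ) : ℝ)| ^ 3)
      = ∑ i ∈ range (m + 1), ((n.choose i : ℝ) * |(n : ℝ) / 2 - (i : ℝ)| ^ 3) := by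
    rw [← Finset.sum_range_reflect]
    apply Finset.sum_congr rfl
    intro i hi
    simp only [Finset.mem_range] at hi
    have h1 : m + 1 + (m + 1 - 1 - i) = n - i := by omega
    rw [h1]
    have h2 : (n.choose (n - i)) = n.choose i := Nat.choose_symm (by omega)
    have h3 : ((n - i : ℕ) : ℝ) = (n : ℝ) - i := by
      rw [Nat.cast_sub (by omega)]
    rw [h2, h3]
    congr 1
    rw [abs_sub_comm ((n:ℝ)/2) ((n:ℝ) - i), show (n:ℝ) - (i:ℝ) - (n:ℝ)/2 = (n:ℝ)/2 - i by ring]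
  rw [hrefl, ← two_mul]
  -- on the first half, drop absolute values
  have habs : ∑ i ∈ range (m + 1), ((n.choose i : ℝ) * |(n : ℝ) / 2 - (i : ℝ)| ^ 3)
      = ∑ i ∈ range (m + 1), (((n:ℝ) - 2 * i)^3 * (n.choose i : ℝ)) / 8 := by
    apply Finset.sum_congr rfl
    intro i hi
    simp only [Finset.mem_range] at hi
    have hpos : (0:ℝ) ≤ (n : ℝ) / 2 - i := by
      have : (i : ℝ) ≤ m := by exact_mod_cast Nat.lt_succ_iff.mp hi
      have : ((2 * m + 1 : ℕ) : ℝ) = 2 * (m:ℝ) + 1 := by push_cast; ring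
      rw [hn', this]
      linarith
    rw [abs_of_nonneg hpos]
    ring
  rw [habs, ← Finset.sum_div, gfun_sum]
  -- final algebra
  have hfac : (n.choose (m+1) : ℝ) * (m+1).factorial * m.factorial = n.factorial := by
    have := Nat.choose_mul_factorial_mul_factorial (show m + 1 ≤ n by omega)
    have h4 : n - (m+1) = m := by omega
    rw [h4] at this
    exact_mod_cast congrArg (fun x : ℕ => (x : ℝ)) this
  have hm : (n - 1) / 2 = m := by omega
  rw [hm]
  have hfm : (0:ℝ) < m.factorial := by exact_mod_cast m.factorial_pos
  have hfm1 : ((m+1).factorial : ℝ) = ((m:ℝ) + 1) * m.factorial := by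
    push_cast [Nat.factorial_succ]; ring
  unfold gfun
  have hcast : ((n : ℕ) : ℝ) = 2 * (m:ℝ) + 1 := by rw [hn']; push_cast; ring
  rw [hcast]
  push_cast
  rw [hfm1] at hfac
  have hnf : (n.factorial : ℝ) = (n.choose (m+1) : ℝ) * ((m:ℝ)+1) * (m.factorial : ℝ)^2 := by
    rw [← hfac]; ring
  rw [hnf]
  field_simp
  ring
end

section
/- For every integer n ≥ 2, the inequality ∑_{i=0}^{n} C(n, i) · |n/2 − i|^3 ≤ n! / Γ(n/2)^2 holds, where C(n, i) denotes the binomial coefficient, Γ is the Gamma function, and the absolute values are taken in ℝ. (For even n this holds with equality, since Γ(n/2) = (n/2 − 1)!.) -/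
open Finset Real Filter Topology

/-- Telescoping identity for partial sums of `C(n,i)·(n-2i)³`. -/
lemma cube_partial (n : ℕ) :
    ∀ k : ℕ, k + 1 ≤ n →
      ∑ i ∈ range (k + 1), (n.choose i : ℝ) * ((n : ℝ) - 2 * i) ^ 3
        = ((k : ℝ) + 1) * (((n : ℝ) - 2 * k) * ((n : ℝ) - 2 * k - 2) + 2 * n)
          * (n.choose (k + 1) : ℝ) := by
  intro k
  induction k with
  | zero =>
      intro h
      simp [Nat.choose_one_right]
      ring
  | succ k ih =>
      intro h
      have hk : k + 1 ≤ n := by omega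
      rw [Finset.sum_range_succ, ih hk]
      have hc : (n.choose (k + 2) : ℝ) * ((k : ℝ) + 2)
          = (n.choose (k + 1) : ℝ) * ((n : ℝ) - ((k : ℝ) + 1)) := by
        have h1 := congrArg (Nat.cast : ℕ → ℝ) (Nat.choose_succ_right_eq n (k + 1))
        push_cast [Nat.cast_sub hk] at h1
        linarith [h1]
      have hk2 : ((k : ℝ) + 2) ≠ 0 := by positivity
      have hcc : (n.choose (k + 2) : ℝ)
          = (n.choose (k + 1) : ℝ) * ((n : ℝ) - (k + 1)) / ((k : ℝ) + 2) := by
        field_simp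
        linarith [hc]
      push_cast
      rw [hcc]
      field_simp
      ring

/-- Sharp Wallis-type bound: `π(4m+1)·C(2m,m)² ≤ 4·16^m`. -/
lemma wallis_bound (m : ℕ) :
    π * (4 * (m:ℝ) + 1) * (((2 * m).choose m : ℝ)) ^ 2 ≤ 4 * 16 ^ m := by
  set g : ℕ → ℝ := fun k => π * (4 * (k:ℝ) + 1) * (((2 * k).choose k : ℝ)) ^ 2 / (4 * 16 ^ k)
    with hg
  have hpos : ∀ k : ℕ, (0:ℝ) < (((2 * k).choose k : ℕ) : ℝ) := fun k => by
    exact_mod_cast Nat.choose_pos (by omega)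
  have hmono : Monotone g := by
    apply monotone_nat_of_le_succ
    intro k
    have hc := hpos k
    have hc' := hpos (k+1)
    have key : ((k : ℝ) + 1) * ((2 * (k+1)).choose (k+1) : ℝ)
        = 2 * (2 * (k:ℝ) + 1) * ((2 * k).choose k : ℝ) := by
      have h1 := congrArg (Nat.cast : ℕ → ℝ) (Nat.succ_mul_centralBinom_succ k)
      simp only [Nat.centralBinom] at h1
      push_cast at h1
      linarith [h1]
    have key2 : ((k : ℝ) + 1)^2 * ((2 * (k+1)).choose (k+1) : ℝ)^2
        = 4 * (2 * (k:ℝ) + 1)^2 * ((2 * k).choose k : ℝ)^2 := by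
      linear_combination (((k : ℝ) + 1) * ((2 * (k+1)).choose (k+1) : ℝ)
        + 2 * (2 * (k:ℝ) + 1) * ((2 * k).choose k : ℝ)) * key
    simp only [hg]
    rw [div_le_div_iff₀ (by positivity) (by positivity)]
    have h16 : (0:ℝ) < 16^k := by positivity
    have hk1 : (0:ℝ) < ((k:ℝ)+1)^2 := by positivity
    have hstep : (4*(k:ℝ)+5) * ((2 * (k+1)).choose (k+1) : ℝ)^2
        - 16*(4*(k:ℝ)+1) * ((2 * k).choose k : ℝ)^2 ≥ 0 := by
      nlinarith [key2, sq_nonneg (((2 * k).choose k : ℕ) : ℝ), hk1]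
    push_cast
    rw [show (16:ℝ)^(k+1) = 16 * 16^k from by rw [pow_succ]; ring]
    nlinarith [mul_nonneg (by positivity : (0:ℝ) ≤ 4 * π * 16^k) hstep]
  have hgW : ∀ k : ℕ, g k = (π/2) / Real.Wallis.W k * ((4*(k:ℝ)+1)/(4*(k:ℝ)+2)) := by
    intro k
    have hW := Real.Wallis.W_eq_factorial_ratio k
    have hWpos := Real.Wallis.W_pos k
    have hfc := congrArg (Nat.cast : ℕ → ℝ)
      (Nat.choose_mul_factorial_mul_factorial (show k ≤ 2*k by omega))
    rw [show 2*k - k = k from by omega] at hfc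
    push_cast at hfc
    have h1 : ((2*k).choose k : ℝ)^2 * ((k.factorial:ℝ))^4 = (((2*k).factorial : ℝ))^2 := by
      nlinarith [hfc]
    have hp : (2:ℝ)^(4*k) = 16^k := by
      rw [pow_mul]; norm_num
    have hWval : Real.Wallis.W k * (2*(k:ℝ)+1) * ((2*k).choose k : ℝ)^2 = 16^k := by
      rw [hW, hp]
      have hf1 : ((k.factorial : ℕ):ℝ) ≠ 0 := by positivity
      have hf2 : (((2*k).factorial : ℕ):ℝ) ≠ 0 := by positivity
      field_simp
      linear_combination h1
    simp only [hg]
    rw [← hWval]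
    have hcne : ((2*k).choose k : ℝ) ≠ 0 := ne_of_gt (hpos k)
    field_simp
    ring
  have hT1 : Tendsto (fun k : ℕ => (π/2) / Real.Wallis.W k) atTop (𝓝 1) := by
    have h := Filter.Tendsto.div (tendsto_const_nhds (x := π/2) (f := atTop))
      Real.Wallis.tendsto_W_nhds_pi_div_two (ne_of_gt pi_div_two_pos)
    rw [div_self (ne_of_gt pi_div_two_pos)] at h
    exact h
  have hT2 : Tendsto (fun k : ℕ => (4*(k:ℝ)+1)/(4*(k:ℝ)+2)) atTop (𝓝 1) := by
    have h42 : Tendsto (fun k : ℕ => (4*(k:ℝ)+2)) atTop atTop := by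
      apply Filter.tendsto_atTop_add_const_right
      exact (tendsto_natCast_atTop_atTop).const_mul_atTop (by norm_num)
    have h := (tendsto_const_nhds (x := (1:ℝ)) (f := atTop)).sub
      ((tendsto_const_nhds (x := (1:ℝ)) (f := atTop)).div_atTop h42)
    rw [sub_zero] at h
    refine h.congr fun k => ?_
    have : (4*(k:ℝ)+2) ≠ 0 := by positivity
    field_simp
    ring
  have hlim : Tendsto g atTop (𝓝 1) := by
    have h := hT1.mul hT2
    rw [one_mul] at h
    exact h.congr fun k => (hgW k).symm
  have hle : g m ≤ 1 := hmono.ge_of_tendsto hlim m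
  simp only [hg] at hle
  rw [div_le_one (by positivity)] at hle
  linarith [hle]

/-- Gamma at half-integers. -/
lemma Gamma_half (j : ℕ) :
    Real.Gamma (((j:ℝ)+1) + 1/2)
      = ((2*(j+1)).factorial : ℝ) * Real.sqrt π / (4^(j+1) * ((j+1).factorial : ℝ)) := by
  have h := Real.Gamma_mul_Gamma_add_half ((j:ℝ)+1)
  have h1 : Real.Gamma ((j:ℝ)+1) = (j.factorial : ℝ) := Real.Gamma_nat_eq_factorial j
  have h2 : Real.Gamma (2*((j:ℝ)+1)) = ((2*j+1).factorial : ℝ) := by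
    rw [show 2*((j:ℝ)+1) = ((2*j+1:ℕ):ℝ)+1 from by push_cast; ring]
    exact Real.Gamma_nat_eq_factorial _
  have h3 : (2:ℝ) ^ ((1:ℝ) - 2*((j:ℝ)+1)) = 2 / 4^(j+1) := by
    rw [Real.rpow_sub two_pos, Real.rpow_one]
    congr 1
    rw [show 2*((j:ℝ)+1) = ((2*(j+1):ℕ):ℝ) from by push_cast; ring, Real.rpow_natCast,
      pow_mul]
    norm_num
  rw [h1, h2, h3] at h
  have hj : (j.factorial : ℝ) ≠ 0 := by positivity
  have hfe1 : ((2*(j+1)).factorial : ℝ) = (2*j+2) * ((2*j+1).factorial : ℝ) := by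
    rw [show 2*(j+1) = (2*j+1)+1 from by ring, Nat.factorial_succ]
    push_cast; ring
  have hfe2 : (((j+1)).factorial : ℝ) = (j+1) * (j.factorial : ℝ) := by
    rw [Nat.factorial_succ]; push_cast; ring
  have hsolve : Real.Gamma (((j:ℝ)+1) + 1/2)
      = ((2*j+1).factorial : ℝ) * (2 / 4^(j+1)) * Real.sqrt π / (j.factorial : ℝ) := by
    field_simp at h ⊢
    linarith [h]
  rw [hsolve, hfe1, hfe2]
  have : ((j:ℝ)+1) ≠ 0 := by positivity
  field_simp

/-- For every integer `n ≥ 2`,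
`∑_{i=0}^{n} C(n, i) · |n/2 − i|^3 ≤ n! / Γ(n/2)^2`. -/
theorem sum_choose_mul_abs_cube_le (n : ℕ) (hn : 2 ≤ n) :
    ∑ i ∈ Finset.range (n + 1), (n.choose i : ℝ) * |(n : ℝ) / 2 - (i : ℝ)| ^ 3
      ≤ (n.factorial : ℝ) / Real.Gamma ((n : ℝ) / 2) ^ 2 := by
  set f : ℕ → ℝ := fun i => (n.choose i : ℝ) * |(n : ℝ) / 2 - (i : ℝ)| ^ 3 with hf
  have hsym : ∀ j, j ≤ n → f (n - j) = f j := by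
    intro j hj
    simp only [hf]
    rw [Nat.choose_symm hj]
    congr 1
    rw [Nat.cast_sub hj,
      show (n:ℝ)/2 - ((n:ℝ) - (j:ℝ)) = -((n:ℝ)/2 - (j:ℝ)) from by ring, abs_neg]
  rcases Nat.even_or_odd n with he | ho
  · -- even case
    obtain ⟨m, hm⟩ := he
    subst hm
    have hm1 : 1 ≤ m := by omega
    obtain ⟨j, rfl⟩ : ∃ j, m = j + 1 := ⟨m - 1, by omega⟩
    set m := j + 1 with hmj
    -- split the sum
    have hsplit : ∑ i ∈ Finset.range (m + m + 1), f i
        = ∑ i ∈ Finset.Ico 0 (m+1), f i + ∑ i ∈ Finset.Ico (m+1) (m+m+1), f i := by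
      rw [Finset.range_eq_Ico,
        ← Finset.sum_Ico_consecutive f (Nat.zero_le (m+1)) (by omega : m+1 ≤ m+m+1)]
    have hrefl : ∑ i ∈ Finset.Ico (m+1) (m+m+1), f i = ∑ i ∈ Finset.Ico 0 m, f i := by
      have hr := Finset.sum_Ico_reflect f 0 (show m ≤ (m+m)+1 by omega)
      rw [show m+m+1-m = m+1 from by omega, Nat.sub_zero] at hr
      rw [← hr]
      exact Finset.sum_congr rfl fun i hi => hsym i (by
        have := Finset.mem_Ico.mp hi; omega)
    have hmid : ∑ i ∈ Finset.Ico 0 (m+1), f i = ∑ i ∈ Finset.Ico 0 m, f i + f m := by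
      exact Finset.sum_Ico_succ_top (Nat.zero_le m) f
    have hfm : f m = 0 := by
      simp only [hf]
      rw [show ((m+m:ℕ):ℝ)/2 - (m:ℝ) = 0 from by push_cast; ring]
      simp
    have hlow : ∑ i ∈ Finset.Ico 0 m, f i
        = (1/8) * ∑ i ∈ Finset.range m, ((m+m).choose i : ℝ) * (((m+m:ℕ):ℝ) - 2*(i:ℝ))^3 := by
      rw [Nat.Ico_zero_eq_range, Finset.mul_sum]
      refine Finset.sum_congr rfl fun i hi => ?_
      have him : i < m := Finset.mem_range.mp hi
      have hpos : (0:ℝ) < ((m+m:ℕ):ℝ)/2 - (i:ℝ) := by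
        have h1 : (i:ℝ) < (j:ℝ)+1 := by exact_mod_cast him
        push_cast
        linarith [show (m:ℝ) = (j:ℝ)+1 from by rw [hmj]; push_cast; ring]
      simp only [hf]
      rw [abs_of_pos hpos]
      push_cast
      ring
    have hcube := cube_partial (m+m) j (by omega)
    rw [show j + 1 = m from rfl] at hcube
    have hfc : (((m+m).choose m : ℕ) : ℝ) * (m.factorial:ℝ) * (m.factorial:ℝ)
        = ((m+m).factorial : ℝ) := by
      have h := Nat.choose_mul_factorial_mul_factorial (show m ≤ m+m by omega)
      rw [show m+m-m = m from by omega] at h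
      exact_mod_cast congrArg (Nat.cast : ℕ → ℝ) h
    -- Gamma value
    have hG : Real.Gamma (((m+m:ℕ):ℝ)/2) = (j.factorial : ℝ) := by
      rw [show ((m+m:ℕ):ℝ)/2 = (j:ℝ)+1 from by push_cast [hmj]; ring]
      exact Real.Gamma_nat_eq_factorial j
    have hfe2 : ((m.factorial : ℕ) : ℝ) = ((j:ℝ)+1) * (j.factorial : ℝ) := by
      rw [hmj, Nat.factorial_succ]; push_cast; ring
    rw [hsplit, hrefl, hmid, hfm, hlow, hcube, hG]
    apply le_of_eq
    rw [eq_div_iff (by positivity : ((j.factorial:ℕ):ℝ)^2 ≠ 0)]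
    push_cast [hmj]
    push_cast [hmj] at hfc hfe2
    linear_combination hfc - (((j+1+(j+1)).choose (j+1) : ℝ)
      * (((j+1).factorial:ℝ) + ((j:ℝ)+1)*(j.factorial:ℝ))) * hfe2
  · -- odd case
    obtain ⟨m, hm⟩ := ho
    subst hm
    have hm1 : 1 ≤ m := by omega
    obtain ⟨j, rfl⟩ : ∃ j, m = j + 1 := ⟨m - 1, by omega⟩
    set m := j + 1 with hmj
    have hsplit : ∑ i ∈ Finset.range (2*m+1+1), f i
        = ∑ i ∈ Finset.Ico 0 (m+1), f i + ∑ i ∈ Finset.Ico (m+1) (2*m+1+1), f i := by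
      rw [Finset.range_eq_Ico,
        ← Finset.sum_Ico_consecutive f (Nat.zero_le (m+1)) (by omega : m+1 ≤ 2*m+1+1)]
    have hrefl : ∑ i ∈ Finset.Ico (m+1) (2*m+1+1), f i = ∑ i ∈ Finset.Ico 0 (m+1), f i := by
      have hr := Finset.sum_Ico_reflect f 0 (show m+1 ≤ (2*m+1)+1 by omega)
      rw [show (2*m+1)+1-(m+1) = m+1 from by omega, Nat.sub_zero] at hr
      rw [← hr]
      exact Finset.sum_congr rfl fun i hi => hsym i (by
        have := Finset.mem_Ico.mp hi; omega)
    have hlow : ∑ i ∈ Finset.Ico 0 (m+1), f i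
        = (1/8) * ∑ i ∈ Finset.range (m+1),
            ((2*m+1).choose i : ℝ) * (((2*m+1:ℕ):ℝ) - 2*(i:ℝ))^3 := by
      rw [Nat.Ico_zero_eq_range, Finset.mul_sum]
      refine Finset.sum_congr rfl fun i hi => ?_
      have him : i ≤ m := Nat.lt_succ_iff.mp (Finset.mem_range.mp hi)
      have hpos : (0:ℝ) < ((2*m+1:ℕ):ℝ)/2 - (i:ℝ) := by
        have h1 : (i:ℝ) ≤ (j:ℝ)+1 := by exact_mod_cast him
        push_cast
        linarith [show (m:ℝ) = (j:ℝ)+1 from by rw [hmj]; push_cast; ring]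
      simp only [hf]
      rw [abs_of_pos hpos]
      push_cast
      ring
    have hcube := cube_partial (2*m+1) m (by omega)
    have hfc : (((2*m).choose m : ℕ) : ℝ) * (m.factorial:ℝ) * (m.factorial:ℝ)
        = ((2*m).factorial : ℝ) := by
      have h := Nat.choose_mul_factorial_mul_factorial (show m ≤ 2*m by omega)
      rw [show 2*m-m = m from by omega] at h
      exact_mod_cast congrArg (Nat.cast : ℕ → ℝ) h
    have hrel : (2*(m:ℝ)+1) * (((2*m).choose m : ℕ) : ℝ)
        = (((2*m+1).choose (m+1) : ℕ) : ℝ) * ((m:ℝ)+1) := by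
      exact_mod_cast congrArg (Nat.cast : ℕ → ℝ) (Nat.add_one_mul_choose_eq (2*m) m)
    have hG : Real.Gamma (((2*m+1:ℕ):ℝ)/2)
        = ((2*m).factorial : ℝ) * Real.sqrt π / (4^m * (m.factorial : ℝ)) := by
      rw [show ((2*m+1:ℕ):ℝ)/2 = ((j:ℝ)+1) + 1/2 from by push_cast [hmj]; ring,
        Gamma_half j, hmj]
    rw [hsplit, hrefl, hlow, hcube, hG]
    have hsq : Real.sqrt π ^ 2 = π := Real.sq_sqrt pi_pos.le
    have h4 : ((4:ℝ)^m)^2 = 16^m := by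
      rw [← pow_mul, mul_comm, pow_mul]; norm_num
    have hfact : ((2*m+1).factorial : ℝ) = (2*(m:ℝ)+1) * ((2*m).factorial : ℝ) := by
      rw [Nat.factorial_succ]; push_cast; ring
    have hGpos : (0:ℝ) < ((2*m).factorial : ℝ) * Real.sqrt π / (4^m * (m.factorial : ℝ)) := by
      have := Real.sqrt_pos.mpr pi_pos
      positivity
    rw [le_div_iff₀ (by positivity)]
    have key : (1/8 * (((m:ℝ)+1) * ((((2*m+1:ℕ):ℝ) - 2*(m:ℝ)) * (((2*m+1:ℕ):ℝ) - 2*(m:ℝ) - 2)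
            + 2*((2*m+1:ℕ):ℝ)) * (((2*m+1).choose (m+1) : ℕ) : ℝ))
          + 1/8 * (((m:ℝ)+1) * ((((2*m+1:ℕ):ℝ) - 2*(m:ℝ)) * (((2*m+1:ℕ):ℝ) - 2*(m:ℝ) - 2)
            + 2*((2*m+1:ℕ):ℝ)) * (((2*m+1).choose (m+1) : ℕ) : ℝ)))
          * (((2*m).factorial : ℝ) * Real.sqrt π / (4^m * (m.factorial : ℝ)))^2
        = ((2*(m:ℝ)+1) * ((2*m).factorial:ℝ) / (4*16^m))
            * (π*(4*(m:ℝ)+1)*(((2*m).choose m : ℕ) : ℝ)^2) := by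
      rw [div_pow, mul_pow, hsq, mul_pow, h4]
      have hmf : ((m.factorial : ℕ):ℝ) ≠ 0 := by positivity
      have h16 : ((16:ℝ)^m) ≠ 0 := by positivity
      rw [hmj] at hfc hrel ⊢
      field_simp
      push_cast at hfc hrel ⊢
      linear_combination (-(8:ℝ)*(4*(j:ℝ)+5)*(((2*(j+1)).choose (j+1) : ℕ):ℝ)
          *(((j+1).factorial : ℕ):ℝ)^2) * hrel
        + (-(8:ℝ)*(4*(j:ℝ)+5)*((j:ℝ)+2)
            *(((2*(j+1)+1).choose (j+1+1) : ℕ):ℝ)) * hfc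
    rw [key]
    calc ((2*(m:ℝ)+1) * ((2*m).factorial:ℝ) / (4*16^m))
            * (π*(4*(m:ℝ)+1)*(((2*m).choose m : ℕ) : ℝ)^2)
        ≤ ((2*(m:ℝ)+1) * ((2*m).factorial:ℝ) / (4*16^m)) * (4*16^m) := by
          apply mul_le_mul_of_nonneg_left _ (by positivity)
          exact_mod_cast wallis_bound m
      _ = ((2*m+1).factorial : ℝ) := by
          rw [hfact]
          field_simp
end

section
/- For every integer n ≥ 1, every real M ≥ 0, and every x = (x_1, …, x_n) ∈ ℝ^n with 0 ≤ x_i ≤ M for all i, the inequality 2^{−n} · ∑_{ε ∈ {−1/2, 1/2}^n} |∑_{i=1}^n ε_i x_i| ≤ M · n · 2^{−n} · C(n − 1, ⌊(n − 1)/2⌋) holds, where the outer sum ranges over all 2^n sign vectors ε with entries ε_i ∈ {−1/2, 1/2} and C denotes the binomial coefficient. -/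
open Finset

private lemma pair_mono' (a s t : ℝ) (h : |s| ≤ t) :
    |a + s/2| + |a - s/2| ≤ |a + t/2| + |a - t/2| := by
  rcases abs_cases s with ⟨h1, h1'⟩ | ⟨h1, h1'⟩ <;>
  rcases abs_cases (a + s/2) with ⟨h2, h2'⟩ | ⟨h2, h2'⟩ <;>
  rcases abs_cases (a - s/2) with ⟨h3, h3'⟩ | ⟨h3, h3'⟩ <;>
  rcases abs_cases (a + t/2) with ⟨h4, h4'⟩ | ⟨h4, h4'⟩ <;>
  rcases abs_cases (a - t/2) with ⟨h5, h5'⟩ | ⟨h5, h5'⟩ <;>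
  rw [h2, h3, h4, h5] <;> linarith

private lemma mono_update' {n : ℕ} (y : Fin n → ℝ) (j : Fin n) (t : ℝ) (h : |y j| ≤ t) :
    ∑ ε : Fin n → Bool, |∑ i, (if ε i then (1:ℝ)/2 else -(1/2)) * y i|
      ≤ ∑ ε : Fin n → Bool, |∑ i, (if ε i then (1:ℝ)/2 else -(1/2)) * Function.update y j t i| := by
  set c : (Fin n → Bool) → Fin n → ℝ := fun ε i => if ε i then (1:ℝ)/2 else -(1/2) with hc
  have hinv : Function.Involutive (fun ε : Fin n → Bool => Function.update ε j (!ε j)) := by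
    intro ε
    funext i
    rcases eq_or_ne i j with rfl | hij
    · simp
    · simp [Function.update_of_ne hij]
  set e := hinv.toPerm with he
  set A : (Fin n → Bool) → ℝ := fun ε => ∑ i ∈ univ.erase j, c ε i * y i with hA
  have hsplit : ∀ (ε : Fin n → Bool) (z : Fin n → ℝ),
      ∑ i, c ε i * z i = c ε j * z j + ∑ i ∈ univ.erase j, c ε i * z i := by
    intro ε z
    exact (Finset.add_sum_erase univ (fun i => c ε i * z i) (mem_univ j)).symm
  have hAe : ∀ ε, A (e ε) = A ε := by
    intro ε
    refine Finset.sum_congr rfl fun i hi => ?_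
    have hij : i ≠ j := (Finset.mem_erase.mp hi).1
    simp [he, Function.Involutive.toPerm, hc, Function.update_of_ne hij]
  have hce : ∀ ε, c (e ε) j = -(c ε j) := by
    intro ε
    simp only [he, Function.Involutive.toPerm, hc, Equiv.coe_fn_mk, Function.update_self]
    cases ε j <;> norm_num
  have hAu : ∀ ε, ∑ i ∈ univ.erase j, c ε i * Function.update y j t i = A ε := by
    intro ε
    refine Finset.sum_congr rfl fun i hi => ?_
    rw [Function.update_of_ne (Finset.mem_erase.mp hi).1]
  have key : ∀ z : Fin n → ℝ,
      ∑ ε : Fin n → Bool, |∑ i, c ε i * z i|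
        = (∑ ε : Fin n → Bool, (|∑ i, c ε i * z i| + |∑ i, c (e ε) i * z i|)) / 2 := by
    intro z
    rw [Finset.sum_add_distrib, Equiv.sum_comp e (fun ε => |∑ i, c ε i * z i|)]
    ring
  rw [key, key]
  apply div_le_div_of_nonneg_right ?_ (by norm_num)
  · apply Finset.sum_le_sum
    intro ε _
    rw [hsplit ε, hsplit ε, hsplit (e ε), hsplit (e ε), hAu, hAu, hce]
    have h1 : ∑ i ∈ univ.erase j, c (e ε) i * y i = A ε := hAe ε
    rw [h1]
    rw [Function.update_self, hAe ε]
    have hcases : c ε j = 1/2 ∨ c ε j = -(1/2) := by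
      simp only [hc]; cases ε j <;> simp
    have hpm := pair_mono' (A ε) (y j) t h
    rcases hcases with hcj | hcj <;> rw [hcj]
    · rw [show (1:ℝ)/2 * y j + A ε = A ε + y j/2 by ring,
        show -(1/2 : ℝ) * y j + A ε = A ε - y j/2 by ring,
        show (1:ℝ)/2 * t + A ε = A ε + t/2 by ring,
        show -(1/2 : ℝ) * t + A ε = A ε - t/2 by ring]
      linarith
    · rw [show -(1/2 : ℝ) * y j + A ε = A ε - y j/2 by ring,
        show -(-(1/2) : ℝ) * y j + A ε = A ε + y j/2 by ring,
        show -(1/2 : ℝ) * t + A ε = A ε - t/2 by ring,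
        show -(-(1/2) : ℝ) * t + A ε = A ε + t/2 by ring]
      linarith

private lemma mono_all' {n : ℕ} (M : ℝ) (hM : 0 ≤ M) (x : Fin n → ℝ) (hx : ∀ i, |x i| ≤ M) :
    ∑ ε : Fin n → Bool, |∑ i, (if ε i then (1:ℝ)/2 else -(1/2)) * x i|
      ≤ ∑ ε : Fin n → Bool, |∑ i, (if ε i then (1:ℝ)/2 else -(1/2)) * M| := by
  have key : ∀ s : Finset (Fin n),
      ∑ ε : Fin n → Bool, |∑ i, (if ε i then (1:ℝ)/2 else -(1/2)) * x i|
        ≤ ∑ ε : Fin n → Bool, |∑ i, (if ε i then (1:ℝ)/2 else -(1/2)) *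
            (s.piecewise (fun _ => M) x) i| := by
    intro s
    induction s using Finset.induction_on with
    | empty => simp
    | @insert j s hj ih =>
      refine le_trans ih ?_
      rw [Finset.piecewise_insert]
      have hyj : |s.piecewise (fun _ => M) x j| ≤ M := by
        by_cases hmem : j ∈ s
        · rw [Finset.piecewise_eq_of_mem _ _ _ hmem]; rw [abs_of_nonneg hM]
        · rw [Finset.piecewise_eq_of_notMem _ _ _ hmem]; exact hx j
      exact mono_update' _ j M hyj
  have := key univ
  rwa [Finset.piecewise_univ] at this

private lemma tele' (n' : ℕ) (m : ℕ) :
    ∑ k ∈ range (m+1), ((n'+1).choose k : ℝ) * (((n':ℝ)+1) - 2*k)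
      = ((n':ℝ)+1) * (n'.choose m) := by
  induction m with
  | zero => simp
  | succ m ih =>
    rw [Finset.sum_range_succ, ih]
    have h1c : ((n':ℝ)+1) * (n'.choose m : ℝ) = ((n'+1).choose (m+1) : ℝ) * ((m:ℝ)+1) := by
      exact_mod_cast congrArg (fun x : ℕ => (x : ℝ)) (Nat.add_one_mul_choose_eq n' m)
    have h2c : (((n'+1).choose (m+1) : ℕ) : ℝ) = (n'.choose m : ℝ) + (n'.choose (m+1) : ℝ) := by
      rw [Nat.choose_succ_succ]
      push_cast
      ring
    push_cast
    linear_combination ((n':ℝ)+1) * h2c + 2 * h1c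

private lemma count_id' (n : ℕ) (hn : 1 ≤ n) :
    ∑ k ∈ range (n+1), (n.choose k : ℝ) * |(n:ℝ) - 2*k|
      = 2 * n * ((n-1).choose ((n-1)/2) : ℝ) := by
  set m := (n-1)/2 with hm
  have habs : ∀ a : ℝ, |a| = max a 0 + max (-a) 0 := by
    intro a
    rcases le_total a 0 with h | h
    · rw [abs_of_nonpos h, max_eq_right h, max_eq_left (by linarith)]; ring
    · rw [abs_of_nonneg h, max_eq_left h, max_eq_right (by linarith)]; ring
  have hsplit : ∑ k ∈ range (n+1), (n.choose k : ℝ) * |(n:ℝ) - 2*k|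
      = (∑ k ∈ range (n+1), (n.choose k : ℝ) * max ((n:ℝ) - 2*k) 0)
        + ∑ k ∈ range (n+1), (n.choose k : ℝ) * max (2*(k:ℝ) - n) 0 := by
    rw [← Finset.sum_add_distrib]
    refine Finset.sum_congr rfl fun k _ => ?_
    rw [habs ((n:ℝ) - 2*k)]
    ring_nf
  have hQP : ∑ k ∈ range (n+1), (n.choose k : ℝ) * max (2*(k:ℝ) - n) 0
      = ∑ k ∈ range (n+1), (n.choose k : ℝ) * max ((n:ℝ) - 2*k) 0 := by
    rw [← Finset.sum_range_reflect (fun k => (n.choose k : ℝ) * max ((n:ℝ) - 2*k) 0) (n+1)]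
    refine Finset.sum_congr rfl fun k hk => ?_
    have hkn : k ≤ n := by simpa [Nat.lt_succ_iff] using hk
    have h1 : n + 1 - 1 - k = n - k := by omega
    rw [h1, Nat.choose_symm hkn, Nat.cast_sub hkn]
    ring_nf
  have hP : ∑ k ∈ range (n+1), (n.choose k : ℝ) * max ((n:ℝ) - 2*k) 0
      = n * ((n-1).choose m : ℝ) := by
    have hsub : range (m+1) ⊆ range (n+1) := by
      apply Finset.range_subset_range.mpr; omega
    rw [← Finset.sum_subset hsub (fun k hk hk2 => ?_)]
    · have : ∑ k ∈ range (m+1), (n.choose k : ℝ) * max ((n:ℝ) - 2*k) 0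
          = ∑ k ∈ range (m+1), (n.choose k : ℝ) * ((n:ℝ) - 2*k) := by
        refine Finset.sum_congr rfl fun k hk => ?_
        have hk' : 2*k < n := by
          simp only [Finset.mem_range] at hk; omega
        rw [max_eq_left]
        have : (2*k : ℝ) < n := by exact_mod_cast hk'
        linarith
      rw [this]
      obtain ⟨n', rfl⟩ : ∃ n', n = n'+1 := ⟨n-1, by omega⟩
      have := tele' n' m
      push_cast at this ⊢
      simpa using this
    · have hk2n : n ≤ 2*k := by
        simp only [Finset.mem_range] at hk hk2; omega
      rw [max_eq_right, mul_zero]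
      have : (n:ℝ) ≤ 2*k := by exact_mod_cast hk2n
      linarith
  rw [hsplit, hQP, hP]
  ring

private def Efs' (n : ℕ) : Finset (Fin n) ≃ (Fin n → Bool) :=
  { toFun := fun S i => decide (i ∈ S)
    invFun := fun ε => univ.filter (fun i => ε i = true)
    left_inv := by intro S; ext i; simp
    right_inv := by intro ε; funext i; simp }

private lemma count_eval' (n : ℕ) :
    ∑ ε : Fin n → Bool, |∑ i, (if ε i then (1:ℝ)/2 else -(1/2))|
      = ∑ k ∈ range (n+1), (n.choose k : ℝ) * |(k:ℝ) - (n:ℝ)/2| := by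
  rw [← Equiv.sum_comp (Efs' n) (fun ε => |∑ i, (if ε i then (1:ℝ)/2 else -(1/2))|)]
  have hval : ∀ S : Finset (Fin n),
      |∑ i, (if Efs' n S i then (1:ℝ)/2 else -(1/2))| = |(S.card:ℝ) - (n:ℝ)/2| := by
    intro S
    congr 1
    have : ∀ i, (if Efs' n S i then (1:ℝ)/2 else -(1/2)) = (if i ∈ S then (1:ℝ) else 0) - 1/2 := by
      intro i
      simp only [Efs', Equiv.coe_fn_mk]
      by_cases h : i ∈ S <;> simp [h] <;> norm_num
    rw [Finset.sum_congr rfl (fun i _ => this i), Finset.sum_sub_distrib]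
    simp [Finset.sum_boole, Finset.filter_mem_eq_inter, Finset.sum_const, Finset.card_univ]
    ring
  rw [Finset.sum_congr rfl (fun S _ => hval S)]
  rw [← Finset.powerset_univ, Finset.sum_powerset]
  simp only [Finset.card_univ, Fintype.card_fin]
  refine Finset.sum_congr rfl fun k hk => ?_
  rw [Finset.sum_congr rfl (fun t ht => by
    rw [(Finset.mem_powersetCard.mp ht).2]), Finset.sum_const, Finset.card_powersetCard,
    Finset.card_univ, Fintype.card_fin, nsmul_eq_mul]

private lemma count_final (n : ℕ) (hn : 1 ≤ n) :
    ∑ ε : Fin n → Bool, |∑ i, (if ε i then (1:ℝ)/2 else -(1/2))|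
      = n * ((n-1).choose ((n-1)/2) : ℝ) := by
  rw [count_eval' n]
  have : ∀ k : ℕ, (n.choose k : ℝ) * |(k:ℝ) - (n:ℝ)/2|
      = (n.choose k : ℝ) * |(n:ℝ) - 2*k| / 2 := by
    intro k
    rw [show (n:ℝ) - 2*(k:ℝ) = -(2*((k:ℝ) - (n:ℝ)/2)) by ring, abs_neg, abs_mul, abs_two]
    ring
  rw [Finset.sum_congr rfl (fun k _ => this k), ← Finset.sum_div, count_id' n hn]
  ring

/-- For every integer `n ≥ 1`, every real `M ≥ 0`, and every `x ∈ [0, M]^n`,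
`2^{−n} · ∑_{ε ∈ {−1/2, 1/2}^n} |∑ ε_i x_i| ≤ M · n · 2^{−n} · C(n − 1, ⌊(n − 1)/2⌋)`. -/
theorem avg_abs_signed_sum_le (n : ℕ) (hn : 1 ≤ n) (M : ℝ) (hM : 0 ≤ M)
    (x : Fin n → ℝ) (hx : ∀ i, 0 ≤ x i ∧ x i ≤ M) :
    ((2 : ℝ) ^ n)⁻¹ *
        ∑ ε : Fin n → Bool, |∑ i, (if ε i then (1 : ℝ) / 2 else -(1 / 2)) * x i|
      ≤ M * n * ((2 : ℝ) ^ n)⁻¹ * ((n - 1).choose ((n - 1) / 2) : ℝ) := by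
  have hxa : ∀ i, |x i| ≤ M := by
    intro i
    rw [abs_of_nonneg (hx i).1]
    exact (hx i).2
  have h1 := mono_all' M hM x hxa
  have h2 : ∑ ε : Fin n → Bool, |∑ i, (if ε i then (1:ℝ)/2 else -(1/2)) * M|
      = M * (n * ((n-1).choose ((n-1)/2) : ℝ)) := by
    have : ∀ ε : Fin n → Bool, |∑ i, (if ε i then (1:ℝ)/2 else -(1/2)) * M|
        = M * |∑ i, (if ε i then (1:ℝ)/2 else -(1/2))| := by
      intro ε
      rw [← Finset.sum_mul, abs_mul, abs_of_nonneg hM]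
      ring
    rw [Finset.sum_congr rfl (fun ε _ => this ε), ← Finset.mul_sum, count_final n hn]
  have h3 : ∑ ε : Fin n → Bool, |∑ i, (if ε i then (1:ℝ)/2 else -(1/2)) * x i|
      ≤ M * (n * ((n-1).choose ((n-1)/2) : ℝ)) := h2 ▸ h1
  have hpos : (0:ℝ) ≤ ((2:ℝ)^n)⁻¹ := by positivity
  calc ((2 : ℝ) ^ n)⁻¹ * ∑ ε : Fin n → Bool, |∑ i, (if ε i then (1:ℝ)/2 else -(1/2)) * x i|
      ≤ ((2 : ℝ) ^ n)⁻¹ * (M * (n * ((n-1).choose ((n-1)/2) : ℝ))) :=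
        mul_le_mul_of_nonneg_left h3 hpos
    _ = M * n * ((2 : ℝ) ^ n)⁻¹ * ((n - 1).choose ((n - 1) / 2) : ℝ) := by ring
end

section
/- For every integer n ≥ 2, every real M ≥ 0, and every x = (x_1, …, x_n) ∈ ℝ^n with 0 ≤ x_i ≤ M for all i, the inequality 2^{−n} · ∑_{ε ∈ {−1/2, 1/2}^n} |∑_{i=1}^n ε_i x_i|^3 ≤ M^3 · 2^{−n} · n! / Γ(n/2)^2 holds, where the outer sum ranges over all 2^n sign vectors ε with entries ε_i ∈ {−1/2, 1/2} and Γ denotes the Gamma function. -/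
open Finset Filter Real

noncomputable section

namespace AvgCube

/-- The signed sum `∑ ε_i x_i` with `ε_i ∈ {−1/2, 1/2}` encoded by booleans. -/
def S (n : ℕ) (x : Fin n → ℝ) (ε : Fin n → Bool) : ℝ :=
  ∑ i, (if ε i then (1:ℝ)/2 else -(1/2)) * x i

/-- The signed sum with all `x_i = 1`. -/
def Wv (n : ℕ) (ε : Fin n → Bool) : ℝ := ∑ i, (if ε i then (1:ℝ)/2 else -(1/2))

def AA (n : ℕ) : ℝ := ∑ ε : Fin n → Bool, |Wv n ε|^3
def BB (n : ℕ) : ℝ := ∑ ε : Fin n → Bool, |Wv n ε|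
def ZZ (n : ℕ) : ℝ := ∑ ε : Fin n → Bool, if Wv n ε = 0 then (1:ℝ) else 0

lemma sum_cons (n : ℕ) (F : (Fin (n+1) → Bool) → ℝ) :
    ∑ ε : Fin (n+1) → Bool, F ε
      = ∑ ε : Fin n → Bool, (F (Fin.cons true ε) + F (Fin.cons false ε)) := by
  rw [← (Fin.consEquiv (fun _ => Bool)).sum_comp F]
  rw [Fintype.sum_prod_type, Fintype.sum_bool]
  rw [← Finset.sum_add_distrib]
  rfl

lemma Wv_cons (n : ℕ) (b : Bool) (ε : Fin n → Bool) :
    Wv (n+1) (Fin.cons b ε) = (if b then (1:ℝ)/2 else -(1/2)) + Wv n ε := by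
  simp [Wv, Fin.sum_univ_succ]

lemma S_cons (n : ℕ) (x : Fin (n+1) → ℝ) (b : Bool) (ε : Fin n → Bool) :
    S (n+1) x (Fin.cons b ε)
      = (if b then (1:ℝ)/2 else -(1/2)) * x 0 + S n (x ∘ Fin.succ) (ε) := by
  simp [S, Fin.sum_univ_succ]

/-! ### Pointwise monotonicity lemmas -/

lemma pair_mono_nonneg {c s t : ℝ} (hc : 0 ≤ c) (hs : 0 ≤ s) (hst : s ≤ t) :
    |c+s|^3 + |c-s|^3 ≤ |c+t|^3 + |c-t|^3 := by
  rw [abs_of_nonneg (by linarith : (0:ℝ) ≤ c+s), abs_of_nonneg (by linarith : (0:ℝ) ≤ c+t)]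
  rcases le_total s c with h | h
  · rw [abs_of_nonneg (by linarith : (0:ℝ) ≤ c-s)]
    rcases le_total t c with h2 | h2
    · rw [abs_of_nonneg (by linarith : (0:ℝ) ≤ c-t)]
      nlinarith [mul_nonneg hc (sub_nonneg.mpr (mul_self_le_mul_self hs hst))]
    · rw [abs_of_nonpos (by linarith : c-t ≤ 0)]
      nlinarith [pow_le_pow_left₀ hc h2 3, mul_nonneg (sq_nonneg c) (sub_nonneg.mpr h2),
        mul_nonneg hc (sub_nonneg.mpr (mul_self_le_mul_self hs h))]
  · rw [abs_of_nonpos (by linarith : c-s ≤ 0), abs_of_nonpos (by linarith : c-t ≤ 0)]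
    nlinarith [pow_le_pow_left₀ hs hst 3, mul_nonneg (sq_nonneg c) (sub_nonneg.mpr hst)]

lemma pair_mono (c : ℝ) {s t : ℝ} (hs : 0 ≤ s) (hst : s ≤ t) :
    |c+s|^3 + |c-s|^3 ≤ |c+t|^3 + |c-t|^3 := by
  rcases le_total 0 c with hc | hc
  · exact pair_mono_nonneg hc hs hst
  · have h := pair_mono_nonneg (by linarith : (0:ℝ) ≤ -c) hs hst
    rw [show -c+s = -(c-s) by ring, show -c-s = -(c+s) by ring,
        show -c+t = -(c-t) by ring, show -c-t = -(c+t) by ring,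
        abs_neg, abs_neg, abs_neg, abs_neg] at h
    linarith

lemma cube_step {a : ℝ} (h : a = 0 ∨ 1/2 ≤ |a|) :
    |a + 1/2|^3 + |a - 1/2|^3 = 2*|a|^3 + (3/2)*|a| + (if a = 0 then (1/4:ℝ) else 0) := by
  have h2 : |(1:ℝ)/2| = 1/2 := abs_of_nonneg (by norm_num)
  rcases h with rfl | h
  · norm_num [h2]
  · rw [if_neg (by intro ha; rw [ha, abs_zero] at h; linarith)]
    rcases le_abs.mp h with h1 | h1
    · rw [abs_of_nonneg (by linarith : (0:ℝ) ≤ a + 1/2),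
        abs_of_nonneg (by linarith : (0:ℝ) ≤ a - 1/2), abs_of_nonneg (by linarith : (0:ℝ) ≤ a)]
      ring
    · rw [abs_of_nonpos (by linarith : a + 1/2 ≤ 0),
        abs_of_nonpos (by linarith : a - 1/2 ≤ 0), abs_of_nonpos (by linarith : a ≤ 0)]
      ring

lemma abs_step {a : ℝ} (h : a = 0 ∨ 1/2 ≤ |a|) :
    |a + 1/2| + |a - 1/2| = 2*|a| + (if a = 0 then (1:ℝ) else 0) := by
  have h2 : |(1:ℝ)/2| = 1/2 := abs_of_nonneg (by norm_num)
  rcases h with rfl | h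
  · norm_num [h2]
  · rw [if_neg (by intro ha; rw [ha, abs_zero] at h; linarith)]
    rcases le_abs.mp h with h1 | h1
    · rw [abs_of_nonneg (by linarith : (0:ℝ) ≤ a + 1/2),
        abs_of_nonneg (by linarith : (0:ℝ) ≤ a - 1/2), abs_of_nonneg (by linarith : (0:ℝ) ≤ a)]
      ring
    · rw [abs_of_nonpos (by linarith : a + 1/2 ≤ 0),
        abs_of_nonpos (by linarith : a - 1/2 ≤ 0), abs_of_nonpos (by linarith : a ≤ 0)]
      ring

/-! ### Step A : monotonicity in the `x` variables -/

lemma sumS_mono : ∀ (n : ℕ) (c : ℝ) (x y : Fin n → ℝ), (∀ i, 0 ≤ x i) → (∀ i, x i ≤ y i) →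
    ∑ ε : Fin n → Bool, (|c + S n x ε|^3 + |c - S n x ε|^3)
      ≤ ∑ ε : Fin n → Bool, (|c + S n y ε|^3 + |c - S n y ε|^3) := by
  intro n
  induction n with
  | zero => intro c x y _ _; simp [S]
  | succ n ih =>
    intro c x y hx hxy
    rw [sum_cons _ (fun ε => (|c + S (n+1) x ε|^3 + |c - S (n+1) x ε|^3)),
        sum_cons _ (fun ε => (|c + S (n+1) y ε|^3 + |c - S (n+1) y ε|^3))]
    simp only [S_cons, if_true, if_false]
    set T := S n (x ∘ Fin.succ) with hT
    set T' := S n (y ∘ Fin.succ) with hT'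
    have h0x : (0:ℝ) ≤ x 0 / 2 := by have := hx 0; linarith
    have hxy0 : x 0 / 2 ≤ y 0 / 2 := by have := hxy 0; linarith
    have step1 : ∀ ε : Fin n → Bool,
        |c + (1/2 * x 0 + T ε)|^3 + |c - (1/2 * x 0 + T ε)|^3
          + (|c + (-(1/2) * x 0 + T ε)|^3 + |c - (-(1/2) * x 0 + T ε)|^3)
        ≤ |(c + y 0 / 2) + T ε|^3 + |(c + y 0 / 2) - T ε|^3
          + (|(c - y 0 / 2) + T ε|^3 + |(c - y 0 / 2) - T ε|^3) := by
      intro ε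
      have p1 := pair_mono (c + T ε) h0x hxy0
      have p2 := pair_mono (c - T ε) h0x hxy0
      have e : ∀ A B : ℝ, A = B → |A| = |B| := fun A B h => by rw [h]
      calc |c + (1/2 * x 0 + T ε)|^3 + |c - (1/2 * x 0 + T ε)|^3
            + (|c + (-(1/2) * x 0 + T ε)|^3 + |c - (-(1/2) * x 0 + T ε)|^3)
          = (|(c + T ε) + x 0 / 2|^3 + |(c + T ε) - x 0 / 2|^3)
            + (|(c - T ε) + x 0 / 2|^3 + |(c - T ε) - x 0 / 2|^3) := by
            rw [e (c + (1/2 * x 0 + T ε)) ((c + T ε) + x 0 / 2) (by ring),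
              e (c - (1/2 * x 0 + T ε)) ((c - T ε) - x 0 / 2) (by ring),
              e (c + (-(1/2) * x 0 + T ε)) ((c + T ε) - x 0 / 2) (by ring),
              e (c - (-(1/2) * x 0 + T ε)) ((c - T ε) + x 0 / 2) (by ring)]
            ring
        _ ≤ (|(c + T ε) + y 0 / 2|^3 + |(c + T ε) - y 0 / 2|^3)
            + (|(c - T ε) + y 0 / 2|^3 + |(c - T ε) - y 0 / 2|^3) := by linarith
        _ = |(c + y 0 / 2) + T ε|^3 + |(c + y 0 / 2) - T ε|^3
            + (|(c - y 0 / 2) + T ε|^3 + |(c - y 0 / 2) - T ε|^3) := by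
            rw [e ((c + T ε) + y 0 / 2) ((c + y 0 / 2) + T ε) (by ring),
              e ((c + T ε) - y 0 / 2) ((c - y 0 / 2) + T ε) (by ring),
              e ((c - T ε) + y 0 / 2) ((c + y 0 / 2) - T ε) (by ring),
              e ((c - T ε) - y 0 / 2) ((c - y 0 / 2) - T ε) (by ring)]
            ring
    have hxt : ∀ i, 0 ≤ (x ∘ Fin.succ) i := fun i => hx _
    have hxyt : ∀ i, (x ∘ Fin.succ) i ≤ (y ∘ Fin.succ) i := fun i => hxy _
    have ih1 := ih (c + y 0 / 2) _ _ hxt hxyt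
    have ih2 := ih (c - y 0 / 2) _ _ hxt hxyt
    have e2 : ∀ ε : Fin n → Bool,
        |c + (1/2 * y 0 + T' ε)|^3 + |c - (1/2 * y 0 + T' ε)|^3
          + (|c + (-(1/2) * y 0 + T' ε)|^3 + |c - (-(1/2) * y 0 + T' ε)|^3)
        = |(c + y 0 / 2) + T' ε|^3 + |(c + y 0 / 2) - T' ε|^3
          + (|(c - y 0 / 2) + T' ε|^3 + |(c - y 0 / 2) - T' ε|^3) := by
      intro ε
      have e : ∀ A B : ℝ, A = B → |A| = |B| := fun A B h => by rw [h]
      rw [e (c + (1/2 * y 0 + T' ε)) ((c + y 0 / 2) + T' ε) (by ring),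
        e (c - (1/2 * y 0 + T' ε)) ((c - y 0 / 2) - T' ε) (by ring),
        e (c + (-(1/2) * y 0 + T' ε)) ((c - y 0 / 2) + T' ε) (by ring),
        e (c - (-(1/2) * y 0 + T' ε)) ((c + y 0 / 2) - T' ε) (by ring)]
      ring
    calc ∑ ε : Fin n → Bool,
          (|c + (1/2 * x 0 + T ε)|^3 + |c - (1/2 * x 0 + T ε)|^3
            + (|c + (-(1/2) * x 0 + T ε)|^3 + |c - (-(1/2) * x 0 + T ε)|^3))
        ≤ ∑ ε : Fin n → Bool,
          (|(c + y 0 / 2) + T ε|^3 + |(c + y 0 / 2) - T ε|^3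
            + (|(c - y 0 / 2) + T ε|^3 + |(c - y 0 / 2) - T ε|^3)) :=
          Finset.sum_le_sum (fun ε _ => step1 ε)
      _ = (∑ ε : Fin n → Bool, (|(c + y 0 / 2) + T ε|^3 + |(c + y 0 / 2) - T ε|^3))
          + ∑ ε : Fin n → Bool, (|(c - y 0 / 2) + T ε|^3 + |(c - y 0 / 2) - T ε|^3) :=
          Finset.sum_add_distrib
      _ ≤ (∑ ε : Fin n → Bool, (|(c + y 0 / 2) + T' ε|^3 + |(c + y 0 / 2) - T' ε|^3))
          + ∑ ε : Fin n → Bool, (|(c - y 0 / 2) + T' ε|^3 + |(c - y 0 / 2) - T' ε|^3) := by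
          exact add_le_add ih1 ih2
      _ = ∑ ε : Fin n → Bool,
          (|(c + y 0 / 2) + T' ε|^3 + |(c + y 0 / 2) - T' ε|^3
            + (|(c - y 0 / 2) + T' ε|^3 + |(c - y 0 / 2) - T' ε|^3)) :=
          Finset.sum_add_distrib.symm
      _ = ∑ ε : Fin n → Bool,
          (|c + (1/2 * y 0 + T' ε)|^3 + |c - (1/2 * y 0 + T' ε)|^3
            + (|c + (-(1/2) * y 0 + T' ε)|^3 + |c - (-(1/2) * y 0 + T' ε)|^3)) :=
          Finset.sum_congr rfl (fun ε _ => (e2 ε).symm)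

lemma sum_abs_cube_le (n : ℕ) (M : ℝ) (hM : 0 ≤ M)
    (x : Fin n → ℝ) (hx : ∀ i, 0 ≤ x i ∧ x i ≤ M) :
    ∑ ε : Fin n → Bool, |S n x ε|^3 ≤ M^3 * AA n := by
  have h := sumS_mono n 0 x (fun _ => M) (fun i => (hx i).1) (fun i => (hx i).2)
  have e1 : ∑ ε : Fin n → Bool, (|0 + S n x ε|^3 + |0 - S n x ε|^3)
      = 2 * ∑ ε : Fin n → Bool, |S n x ε|^3 := by
    rw [Finset.mul_sum]
    apply Finset.sum_congr rfl
    intro ε _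
    rw [zero_add, zero_sub, abs_neg]
    ring
  have hS : ∀ ε : Fin n → Bool, S n (fun _ => M) ε = M * Wv n ε := by
    intro ε
    rw [S, Wv, Finset.mul_sum]
    exact Finset.sum_congr rfl (fun i _ => by ring)
  have e2 : ∑ ε : Fin n → Bool, (|0 + S n (fun _ => M) ε|^3 + |0 - S n (fun _ => M) ε|^3)
      = 2 * (M^3 * AA n) := by
    rw [AA, Finset.mul_sum, Finset.mul_sum]
    apply Finset.sum_congr rfl
    intro ε _
    rw [zero_add, zero_sub, abs_neg, hS, abs_mul, abs_of_nonneg hM, mul_pow]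
    ring
  rw [e1, e2] at h
  linarith

/-! ### Step B : combinatorial identities -/

lemma Wv_eq_card (n : ℕ) (ε : Fin n → Bool) :
    Wv n ε = ((univ.filter fun i => ε i = true).card : ℝ) - n/2 := by
  have h1 : ∀ i : Fin n, (if ε i then (1:ℝ)/2 else -(1/2))
      = (if ε i = true then (1:ℝ) else 0) - 1/2 := by
    intro i; by_cases h : ε i <;> simp [h] <;> norm_num
  rw [Wv, Finset.sum_congr rfl (fun i _ => h1 i), Finset.sum_sub_distrib, Finset.sum_boole]
  simp [Finset.card_univ]
  ring

lemma Wv_half (n : ℕ) (ε : Fin n → Bool) : Wv n ε = 0 ∨ 1/2 ≤ |Wv n ε| := by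
  rcases eq_or_ne (Wv n ε) 0 with h | h
  · exact Or.inl h
  · right
    set c := (univ.filter fun i => ε i = true).card
    have hz : Wv n ε = ((2 * c - n : ℤ) : ℝ) / 2 := by
      rw [Wv_eq_card]; push_cast; ring
    have hz0 : (2 * (c:ℤ) - n) ≠ 0 := by
      intro h0; apply h; rw [hz, h0]; norm_num
    have : (1:ℤ) ≤ |2 * (c:ℤ) - n| := Int.one_le_abs hz0
    rw [hz, abs_div]
    rw [show |(2:ℝ)| = 2 from abs_of_nonneg (by norm_num)]
    have h2 : (1:ℝ) ≤ |((2 * c - n : ℤ) : ℝ)| := by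
      rw [← Int.cast_abs]; exact_mod_cast this
    linarith

lemma sum_bool_finset (N : ℕ) (g : Finset (Fin N) → ℝ) :
    ∑ ε : Fin N → Bool, g (univ.filter fun i => ε i = true) = ∑ s : Finset (Fin N), g s := by
  apply Fintype.sum_bijective (fun ε : Fin N → Bool => univ.filter fun i => ε i = true)
  · constructor
    · intro a b hab
      funext i
      dsimp only at hab
      rw [Finset.ext_iff] at hab
      have hi := hab i
      simp only [Finset.mem_filter, Finset.mem_univ, true_and] at hi
      by_cases h : a i <;> by_cases h2 : b i <;> simp_all
    · intro s
      refine ⟨fun i => decide (i ∈ s), ?_⟩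
      ext i; simp
  · intro ε; rfl

lemma ZZ_card (N : ℕ) :
    ZZ N = ((univ.filter fun s : Finset (Fin N) => 2 * s.card = N).card : ℝ) := by
  have key : ∀ ε : Fin N → Bool,
      (if Wv N ε = 0 then (1:ℝ) else 0)
        = (if 2 * (univ.filter fun i => ε i = true).card = N then (1:ℝ) else 0) := by
    intro ε
    congr 1
    rw [eq_iff_iff, Wv_eq_card]
    constructor
    · intro h
      have : ((2 * (univ.filter fun i => ε i = true).card : ℕ) : ℝ) = (N : ℝ) := by
        push_cast; linarith
      exact_mod_cast this
    · intro h
      have : ((2 * (univ.filter fun i => ε i = true).card : ℕ) : ℝ) = (N : ℝ) := by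
        exact_mod_cast congrArg (Nat.cast : ℕ → ℝ) h
      push_cast at this; linarith
  rw [ZZ, Finset.sum_congr rfl (fun ε _ => key ε),
    sum_bool_finset N (fun s => if 2 * s.card = N then (1:ℝ) else 0), Finset.sum_boole]

lemma ZZ_even (m : ℕ) : ZZ (2*m) = ((2*m).choose m : ℝ) := by
  rw [ZZ_card]
  congr 2
  have : (univ.filter fun s : Finset (Fin (2*m)) => 2 * s.card = 2*m)
      = (univ.filter fun s : Finset (Fin (2*m)) => s.card = m) := by
    apply Finset.filter_congr; intro s _
    constructor
    · intro h; omega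
    · intro h; omega
  rw [this, ← Finset.powerset_univ, ← Finset.powersetCard_eq_filter,
    Finset.card_powersetCard, Finset.card_univ, Fintype.card_fin]

lemma ZZ_odd (m : ℕ) : ZZ (2*m+1) = 0 := by
  rw [ZZ_card]
  rw [Finset.filter_false_of_mem (fun s _ => by omega)]
  simp

lemma AA_succ (n : ℕ) : AA (n+1) = 2*AA n + (3/2)*BB n + (1/4)*ZZ n := by
  rw [AA, sum_cons _ (fun ε => |Wv (n+1) ε|^3)]
  have key : ∀ ε : Fin n → Bool,
      |Wv (n+1) (Fin.cons true ε)|^3 + |Wv (n+1) (Fin.cons false ε)|^3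
      = 2*|Wv n ε|^3 + (3/2)*|Wv n ε| + (1/4) * (if Wv n ε = 0 then (1:ℝ) else 0) := by
    intro ε
    rw [Wv_cons, Wv_cons, if_pos rfl, if_neg (by simp),
      show (1:ℝ)/2 + Wv n ε = Wv n ε + 1/2 by ring,
      show -((1:ℝ)/2) + Wv n ε = Wv n ε - 1/2 by ring,
      cube_step (Wv_half n ε)]
    split <;> ring
  rw [Finset.sum_congr rfl (fun ε _ => key ε), Finset.sum_add_distrib, Finset.sum_add_distrib,
    ← Finset.mul_sum, ← Finset.mul_sum, ← Finset.mul_sum]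
  rfl

lemma BB_succ (n : ℕ) : BB (n+1) = 2*BB n + ZZ n := by
  rw [BB, sum_cons _ (fun ε => |Wv (n+1) ε|)]
  have key : ∀ ε : Fin n → Bool,
      |Wv (n+1) (Fin.cons true ε)| + |Wv (n+1) (Fin.cons false ε)|
      = 2*|Wv n ε| + (if Wv n ε = 0 then (1:ℝ) else 0) := by
    intro ε
    rw [Wv_cons, Wv_cons, if_pos rfl, if_neg (by simp),
      show (1:ℝ)/2 + Wv n ε = Wv n ε + 1/2 by ring,
      show -((1:ℝ)/2) + Wv n ε = Wv n ε - 1/2 by ring,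
      abs_step (Wv_half n ε)]
  rw [Finset.sum_congr rfl (fun ε _ => key ε), Finset.sum_add_distrib, ← Finset.mul_sum]
  rfl

lemma AB_even : ∀ m : ℕ, AA (2*m) = (m:ℝ)^2 * Nat.centralBinom m
    ∧ BB (2*m) = (m:ℝ) * Nat.centralBinom m := by
  intro m
  induction m with
  | zero =>
    constructor <;> simp [AA, BB, Wv]
  | succ m ih =>
    obtain ⟨hA, hB⟩ := ih
    have h1 : 2*(m+1) = (2*m)+1+1 := by ring
    have hZe := ZZ_even m
    have hZo := ZZ_odd m
    have hcb : ((m:ℝ)+1) * (Nat.centralBinom (m+1) : ℝ)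
        = 2*(2*(m:ℝ)+1) * Nat.centralBinom m := by
      exact_mod_cast congrArg (Nat.cast : ℕ → ℝ) (Nat.succ_mul_centralBinom_succ m)
    have hcc : (Nat.centralBinom m : ℝ) = ((2*m).choose m : ℝ) := by
      rw [Nat.centralBinom]
    constructor
    · rw [h1, AA_succ, AA_succ, BB_succ, hA, hB, hZo, hZe, ← hcc]
      push_cast
      nlinarith [hcb]
    · rw [h1, BB_succ, BB_succ, hB, hZo, hZe, ← hcc]
      push_cast
      nlinarith [hcb]

/-! ### The Wallis-product bound for the central binomial coefficient -/

def V (m : ℕ) : ℝ := Real.Wallis.W m * ((4*m+2)/(4*m+1))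

lemma V_antitone : Antitone V := by
  apply antitone_nat_of_succ_le
  intro m
  unfold V
  rw [Real.Wallis.W_succ]
  have hW := Real.Wallis.W_pos m
  have hm : (0:ℝ) ≤ (m:ℝ) := Nat.cast_nonneg m
  push_cast
  rw [mul_assoc]
  apply mul_le_mul_of_nonneg_left _ hW.le
  rw [div_mul_div_comm, div_mul_div_comm, div_le_div_iff₀ (by positivity) (by positivity)]
  nlinarith [sq_nonneg ((m:ℝ)), hm]

lemma V_tendsto : Tendsto V atTop (nhds (π/2)) := by
  have h1 : Tendsto (fun m : ℕ => ((4*m+2)/(4*m+1) : ℝ)) atTop (nhds 1) := by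
    have h2 : Tendsto (fun m : ℕ => ((4:ℝ)*m+1)) atTop atTop := by
      apply Filter.tendsto_atTop_add_const_right
      apply Filter.Tendsto.const_mul_atTop (by norm_num : (0:ℝ) < 4)
      exact tendsto_natCast_atTop_atTop
    have h3 : Tendsto (fun m : ℕ => 1/((4:ℝ)*m+1)) atTop (nhds 0) :=
      tendsto_const_nhds.div_atTop h2
    have h4 : ∀ m : ℕ, ((4*(m:ℝ)+2)/(4*m+1) : ℝ) = 1 + 1/(4*m+1) := by
      intro m
      have : ((4:ℝ)*m+1) ≠ 0 := by positivity
      field_simp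
      ring
    simp only [h4]
    have h5 : Tendsto (fun _ : ℕ => (1:ℝ)) atTop (nhds 1) := tendsto_const_nhds
    simpa using h5.add h3
  have := Real.Wallis.tendsto_W_nhds_pi_div_two.mul h1
  simp only [mul_one] at this
  exact this

lemma V_ge (m : ℕ) : π/2 ≤ V m := V_antitone.le_of_tendsto V_tendsto m

lemma hC_eq (m : ℕ) : (Nat.centralBinom m : ℝ) * (m.factorial : ℝ)^2 = ((2*m).factorial : ℝ) := by
  have := Nat.choose_mul_factorial_mul_factorial (by omega : m ≤ 2*m)
  rw [Nat.centralBinom]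
  have h2 : 2*m - m = m := by omega
  rw [h2] at this
  push_cast [← this]
  ring

lemma central_sq_bound (m : ℕ) : π * (Nat.centralBinom m : ℝ)^2 * (4*m+1) ≤ 4 * 16^m := by
  have hV := V_ge m
  have hWf := Real.Wallis.W_eq_factorial_ratio m
  have hC := hC_eq m
  have hfac : (0:ℝ) < (Nat.factorial m : ℝ) := by exact_mod_cast Nat.factorial_pos m
  have hCpos : (0:ℝ) < (Nat.centralBinom m : ℝ) := by
    exact_mod_cast Nat.centralBinom_pos m
  have hW : Real.Wallis.W m = 16^m / ((Nat.centralBinom m : ℝ)^2 * (2*m+1)) := by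
    rw [hWf, ← hC]
    rw [show ((2:ℝ))^(4*m) = 16^m by rw [pow_mul]; norm_num]
    push_cast
    field_simp
  rw [V, hW] at hV
  have h41 : (0:ℝ) < 4*(m:ℝ)+1 := by positivity
  have h21 : (0:ℝ) < 2*(m:ℝ)+1 := by positivity
  rw [div_mul_div_comm, le_div_iff₀ (by positivity)] at hV
  nlinarith [hV, Real.pi_pos, sq_nonneg ((Nat.centralBinom m : ℝ)),
    pow_pos (show (0:ℝ) < 16 by norm_num) m]

/-! ### Gamma function values -/

lemma Gamma_half (m : ℕ) :
    Real.Gamma ((m:ℝ) + 1/2) = Real.sqrt π * ((2*m).factorial : ℝ) / (4^m * (m.factorial : ℝ)) := by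
  induction m with
  | zero =>
    rw [show ((0:ℕ):ℝ) + 1/2 = 1/2 by norm_num, Real.Gamma_one_half_eq]
    simp
  | succ m ih =>
    have h1 : ((m:ℝ)+1) + 1/2 = ((m:ℝ) + 1/2) + 1 := by ring
    push_cast
    rw [h1, Real.Gamma_add_one (by positivity), ih]
    have hf : (0:ℝ) < (m.factorial : ℝ) := by exact_mod_cast m.factorial_pos
    have h4 : (0:ℝ) < (4:ℝ)^m := by positivity
    rw [show 2*(m+1) = (2*m+1)+1 by ring, Nat.factorial_succ, Nat.factorial_succ,
      Nat.factorial_succ]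
    push_cast
    field_simp
    ring

/-! ### The main bound on `AA` -/

lemma AA_le (n : ℕ) (hn : 1 ≤ n) :
    AA n ≤ (n.factorial : ℝ) / Real.Gamma ((n:ℝ)/2)^2 := by
  have hcc : ∀ m : ℕ, (Nat.centralBinom m : ℝ) = ((2*m).choose m : ℝ) := fun m => by
    rw [Nat.centralBinom]
  rcases Nat.even_or_odd n with ⟨m, rfl⟩ | ⟨m, rfl⟩
  · -- n = 2m, m ≥ 1
    have hm : 1 ≤ m := by omega
    have hG : Real.Gamma (((m+m : ℕ):ℝ)/2) = ((m-1).factorial : ℝ) := by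
      have h1 : (((m+m:ℕ):ℝ))/2 = ((m-1:ℕ):ℝ) + 1 := by
        push_cast [Nat.cast_sub hm]
        ring
      rw [h1, Real.Gamma_nat_eq_factorial]
    rw [hG]
    have hmm : m + m = 2*m := by ring
    rw [hmm] at *
    have hA := (AB_even m).1
    rw [hA]
    have hf1 : (0:ℝ) < ((m-1).factorial : ℝ) := by exact_mod_cast (m-1).factorial_pos
    have hfm : (m.factorial : ℝ) = (m:ℝ) * ((m-1).factorial : ℝ) := by
      have : m = (m-1) + 1 := by omega
      rw [this, Nat.factorial_succ]
      push_cast [Nat.cast_sub hm]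
      ring
    apply le_of_eq
    rw [eq_div_iff (by positivity)]
    have := hC_eq m
    rw [hfm] at this
    nlinarith [this]
  · -- n = 2m+1
    have hG : Real.Gamma (((2*m+1 : ℕ):ℝ)/2)
        = Real.sqrt π * ((2*m).factorial : ℝ) / (4^m * (m.factorial : ℝ)) := by
      rw [show (((2*m+1:ℕ):ℝ))/2 = (m:ℝ) + 1/2 by push_cast; ring, Gamma_half]
    rw [hG]
    set C := (Nat.centralBinom m : ℝ) with hCdef
    have hCpos : (0:ℝ) < C := by rw [hCdef]; exact_mod_cast Nat.centralBinom_pos m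
    have hfpos : (0:ℝ) < (m.factorial : ℝ) := by exact_mod_cast m.factorial_pos
    have h2fpos : (0:ℝ) < ((2*m).factorial : ℝ) := by exact_mod_cast (2*m).factorial_pos
    have h16 : (0:ℝ) < (16:ℝ)^m := by positivity
    have h4 : (0:ℝ) < (4:ℝ)^m := by positivity
    have hAAodd : AA (2*m+1) = (2*(m:ℝ)^2 + 3/2*(m:ℝ) + 1/4) * C := by
      rw [AA_succ, (AB_even m).1, (AB_even m).2, ZZ_even, ← hcc, ← hCdef]
      ring
    rw [hAAodd]
    have hGsq : (Real.sqrt π * ((2*m).factorial : ℝ) / (4^m * (m.factorial : ℝ)))^2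
        = π * ((2*m).factorial : ℝ)^2 / (16^m * (m.factorial : ℝ)^2) := by
      rw [div_pow, mul_pow, mul_pow, Real.sq_sqrt Real.pi_pos.le,
        show ((4:ℝ)^m)^2 = 16^m by rw [← pow_mul, mul_comm, pow_mul]; norm_num]
    rw [hGsq]
    rw [div_div_eq_mul_div, le_div_iff₀ (by positivity), mul_comm]
    have hfac21 : ((2*m+1).factorial : ℝ) = (2*(m:ℝ)+1) * ((2*m).factorial : ℝ) := by
      rw [Nat.factorial_succ]
      push_cast
      ring
    have hC2 : ((2*m).factorial : ℝ) = C * (m.factorial : ℝ)^2 := (hC_eq m).symm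
    rw [hfac21, hC2]
    have key : (2*(m:ℝ)^2+3/2*(m:ℝ)+1/4) * π * C^2 ≤ (2*(m:ℝ)+1) * 16^m := by
      have hb := central_sq_bound m
      nlinarith [mul_le_mul_of_nonneg_left hb (show (0:ℝ) ≤ (2*(m:ℝ)+1)/4 by positivity)]
    nlinarith [mul_le_mul_of_nonneg_right key
      (show (0:ℝ) ≤ C * (m.factorial : ℝ)^2 * (m.factorial : ℝ)^2 by positivity)]

end AvgCube

end

/-- For every integer `n ≥ 2`, every real `M ≥ 0`, and every `x ∈ [0, M]^n`,
`2^{−n} · ∑_{ε ∈ {−1/2, 1/2}^n} |∑ ε_i x_i|^3 ≤ M^3 · 2^{−n} · n! / Γ(n/2)^2`. -/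
theorem avg_abs_signed_sum_cube_le (n : ℕ) (hn : 2 ≤ n) (M : ℝ) (hM : 0 ≤ M)
    (x : Fin n → ℝ) (hx : ∀ i, 0 ≤ x i ∧ x i ≤ M) :
    ((2 : ℝ) ^ n)⁻¹ *
        ∑ ε : Fin n → Bool, |∑ i, (if ε i then (1 : ℝ) / 2 else -(1 / 2)) * x i| ^ 3
      ≤ M ^ 3 * ((2 : ℝ) ^ n)⁻¹ * (n.factorial : ℝ) / Real.Gamma ((n : ℝ) / 2) ^ 2 := by
  have h1 : ∑ ε : Fin n → Bool, |∑ i, (if ε i then (1 : ℝ) / 2 else -(1 / 2)) * x i| ^ 3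
      ≤ M^3 * AvgCube.AA n := AvgCube.sum_abs_cube_le n M hM x hx
  have h2 := AvgCube.AA_le n (by omega)
  calc ((2 : ℝ) ^ n)⁻¹ *
        ∑ ε : Fin n → Bool, |∑ i, (if ε i then (1 : ℝ) / 2 else -(1 / 2)) * x i| ^ 3
      ≤ ((2 : ℝ) ^ n)⁻¹ * (M^3 * AvgCube.AA n) := by
        apply mul_le_mul_of_nonneg_left h1 (by positivity)
    _ ≤ ((2 : ℝ) ^ n)⁻¹ * (M^3 * ((n.factorial : ℝ) / Real.Gamma ((n : ℝ) / 2) ^ 2)) := by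
        apply mul_le_mul_of_nonneg_left
          (mul_le_mul_of_nonneg_left h2 (by positivity)) (by positivity)
    _ = M ^ 3 * ((2 : ℝ) ^ n)⁻¹ * (n.factorial : ℝ) / Real.Gamma ((n : ℝ) / 2) ^ 2 := by ring
end

section
/- For every integer k ≥ 1 and every real p ≥ 1, the number of integer lattice points in the p-norm ball of radius R is asymptotic to its volume: lim_{R → ∞} #{x ∈ ℤ^k : ‖x‖_p ≤ R} / R^k = [2·Γ(1 + 1/p)]^k / Γ(1 + k/p), where Γ denotes the Gamma function. -/
open MeasureTheory Real Filter Set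

private lemma aux_ratio (c : ℝ) (k : ℕ) :
    Tendsto (fun R : ℝ => (R + c) ^ k / R ^ k) atTop (nhds 1) := by
  have h : Tendsto (fun R : ℝ => (1 + c / R) ^ k) atTop (nhds 1) := by
    have h1 : Tendsto (fun R : ℝ => c / R) atTop (nhds 0) :=
      Tendsto.div_atTop tendsto_const_nhds tendsto_id
    have h2 : Tendsto (fun R : ℝ => 1 + c / R) atTop (nhds (1 + 0)) :=
      tendsto_const_nhds.add h1
    simpa using h2.pow k
  refine Tendsto.congr' ?_ h
  filter_upwards [eventually_gt_atTop 0] with R hR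
  rw [← div_pow]
  congr 1
  field_simp

private def cube (k : ℕ) (x : Fin k → ℤ) : Set (Fin k → ℝ) :=
  Set.univ.pi fun i => Set.Ico (x i : ℝ) (x i + 1)

private lemma cube_vol (k : ℕ) (x : Fin k → ℤ) : volume (cube k x) = 1 := by
  rw [cube, volume_pi_pi]
  simp [Real.volume_Ico]

private lemma cube_meas (k : ℕ) (x : Fin k → ℤ) : MeasurableSet (cube k x) :=
  MeasurableSet.univ_pi fun _ => measurableSet_Ico

private lemma cube_disjoint {k : ℕ} {x y : Fin k → ℤ} (h : x ≠ y) :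
    Disjoint (cube k x) (cube k y) := by
  rw [Set.disjoint_left]
  intro z hx hy
  apply h
  funext i
  have h1 := hx i (Set.mem_univ i)
  have h2 := hy i (Set.mem_univ i)
  simp only [Set.mem_Ico] at h1 h2
  have hxy : (x i : ℝ) < y i + 1 := lt_of_le_of_lt h1.1 h2.2
  have hyx : (y i : ℝ) < x i + 1 := lt_of_le_of_lt h2.1 h1.2
  have : x i < y i + 1 := by exact_mod_cast hxy
  have : y i < x i + 1 := by exact_mod_cast hyx
  omega

private lemma count_eq {k : ℕ} (S : Set (Fin k → ℤ)) (hS : S.Finite) :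
    volume (⋃ x ∈ S, cube k x) = Nat.card S := by
  have : (⋃ x ∈ S, cube k x) = ⋃ x ∈ hS.toFinset, cube k x := by
    simp [Set.Finite.mem_toFinset]
  rw [this, measure_biUnion_finset ?_ (fun x _ => cube_meas k x)]
  · simp only [cube_vol, Finset.sum_const, nsmul_eq_mul, mul_one]
    rw [Nat.card_eq_card_finite_toFinset hS]
  · intro x hx y hy hxy
    exact cube_disjoint hxy

private lemma nrm_tri {k : ℕ} {p : ℝ} (hp : 1 ≤ p) (x y : Fin k → ℝ) :
    (∑ i, |x i| ^ p) ^ (1 / p) ≤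
      (∑ i, |y i| ^ p) ^ (1 / p) + (∑ i, |x i - y i| ^ p) ^ (1 / p) := by
  have := Real.Lp_add_le Finset.univ y (fun i => x i - y i) hp
  simpa using this

private lemma nrm_small {k : ℕ} {p : ℝ} (hp : 1 ≤ p) (hk : 1 ≤ k) (d : Fin k → ℝ)
    (hd : ∀ i, |d i| ≤ 1) : (∑ i, |d i| ^ p) ^ (1 / p) ≤ (k : ℝ) := by
  have hp0 : 0 < p := by linarith
  have h1 : ∑ i, |d i| ^ p ≤ (k : ℝ) := by
    calc ∑ i, |d i| ^ p ≤ ∑ _i : Fin k, (1 : ℝ) :=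
          Finset.sum_le_sum fun i _ => Real.rpow_le_one (abs_nonneg _) (hd i) hp0.le
      _ = k := by simp
  calc (∑ i, |d i| ^ p) ^ (1 / p) ≤ (k : ℝ) ^ (1 / p) :=
        Real.rpow_le_rpow (by positivity) h1 (by positivity)
    _ ≤ (k : ℝ) ^ (1 : ℝ) :=
        Real.rpow_le_rpow_of_exponent_le (by exact_mod_cast hk)
          (by rw [div_le_one hp0]; linarith)
    _ = k := Real.rpow_one _

private lemma setFinite {k : ℕ} {p : ℝ} (hp : 1 ≤ p) (R : ℝ) :
    {x : Fin k → ℤ | (∑ i, |(x i : ℝ)| ^ p) ^ (1 / p) ≤ R}.Finite := by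
  have hp0 : 0 < p := by linarith
  apply Set.Finite.subset (Set.Finite.pi (fun _ : Fin k => Set.finite_Icc (-⌈R⌉) ⌈R⌉))
  intro x hx
  simp only [Set.mem_setOf_eq] at hx
  intro i _
  have habs : |(x i : ℝ)| ≤ R := by
    have h1 : |(x i : ℝ)| ^ p ≤ ∑ j, |(x j : ℝ)| ^ p :=
      Finset.single_le_sum (f := fun j => |(x j : ℝ)| ^ p) (fun j _ => by positivity)
        (Finset.mem_univ i)
    have h2 : (|(x i : ℝ)| ^ p) ^ (1 / p) ≤ (∑ j, |(x j : ℝ)| ^ p) ^ (1 / p) :=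
      Real.rpow_le_rpow (by positivity) h1 (by positivity)
    rw [← Real.rpow_mul (abs_nonneg _), mul_one_div, div_self hp0.ne', Real.rpow_one] at h2
    exact h2.trans hx
  obtain ⟨ha, hb⟩ := abs_le.mp habs
  constructor
  · have : (-(⌈R⌉ : ℝ)) ≤ x i := le_trans (by simpa using neg_le_neg (Int.le_ceil R)) ha
    exact_mod_cast this
  · have : (x i : ℝ) ≤ ⌈R⌉ := le_trans hb (Int.le_ceil R)
    exact_mod_cast this


/-- For every integer `k ≥ 1` and every real `p ≥ 1`, the number of integer lattice points
in the `p`-norm ball of radius `R` is asymptotic to its volume: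
`lim_{R → ∞} #{x ∈ ℤ^k : ‖x‖_p ≤ R} / R^k = [2·Γ(1 + 1/p)]^k / Γ(1 + k/p)`. -/
theorem lattice_point_count_asymptotic (k : ℕ) (hk : 1 ≤ k) (p : ℝ) (hp : 1 ≤ p) :
    Filter.Tendsto
      (fun R : ℝ =>
        (Nat.card {x : Fin k → ℤ | (∑ i, |(x i : ℝ)| ^ p) ^ (1 / p) ≤ R} : ℝ) / R ^ k)
      Filter.atTop
      (nhds ((2 * Real.Gamma (1 + 1 / p)) ^ k / Real.Gamma (1 + k / p))) := by
  have hp0 : 0 < p := by linarith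
  haveI : Nonempty (Fin k) := Fin.pos_iff_nonempty.mp hk
  set C : ℝ := (2 * Real.Gamma (1 / p + 1)) ^ k / Real.Gamma ((k : ℝ) / p + 1) with hCdef
  have hC0 : 0 ≤ C := by
    apply div_nonneg (pow_nonneg ?_ _) ?_
    · exact mul_nonneg (by norm_num) (Real.Gamma_pos_of_pos (by positivity)).le
    · exact (Real.Gamma_pos_of_pos (by positivity)).le
  have hvol : ∀ r : ℝ, 0 ≤ r →
      volume {y : Fin k → ℝ | (∑ i, |y i| ^ p) ^ (1 / p) ≤ r} = ENNReal.ofReal (r ^ k * C) := by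
    intro r hr
    rw [MeasureTheory.volume_sum_rpow_le (Fin k) hp r, Fintype.card_fin,
      ← ENNReal.ofReal_pow hr, ← hCdef, ← ENNReal.ofReal_mul (pow_nonneg hr k)]
  have key : ∀ R : ℝ, (k : ℝ) ≤ R →
      (R - k) ^ k * C ≤
        (Nat.card {x : Fin k → ℤ | (∑ i, |(x i : ℝ)| ^ p) ^ (1 / p) ≤ R} : ℝ) ∧
      (Nat.card {x : Fin k → ℤ | (∑ i, |(x i : ℝ)| ^ p) ^ (1 / p) ≤ R} : ℝ) ≤
        (R + k) ^ k * C := by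
    intro R hR
    have hk0 : (0 : ℝ) ≤ k := Nat.cast_nonneg k
    have hR0 : 0 ≤ R := le_trans hk0 hR
    set S := {x : Fin k → ℤ | (∑ i, |(x i : ℝ)| ^ p) ^ (1 / p) ≤ R} with hSdef
    have hFin : S.Finite := setFinite hp R
    have hcount : volume (⋃ x ∈ S, cube k x) = Nat.card S := count_eq S hFin
    have hU : (⋃ x ∈ S, cube k x) ⊆
        {y : Fin k → ℝ | (∑ i, |y i| ^ p) ^ (1 / p) ≤ R + k} := by
      intro y hy
      simp only [Set.mem_iUnion, exists_prop] at hy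
      obtain ⟨x, hxS, hyx⟩ := hy
      have hd : ∀ i, |y i - (x i : ℝ)| ≤ 1 := by
        intro i
        have h := hyx i (Set.mem_univ i)
        simp only [Set.mem_Ico] at h
        rw [abs_le]; constructor <;> [linarith [h.1]; linarith [h.2]]
      have hxS' : (∑ i, |(x i : ℝ)| ^ p) ^ (1 / p) ≤ R := hxS
      calc (∑ i, |y i| ^ p) ^ (1 / p) ≤
            (∑ i, |(x i : ℝ)| ^ p) ^ (1 / p) + (∑ i, |y i - (x i : ℝ)| ^ p) ^ (1 / p) :=
            nrm_tri hp y (fun i => (x i : ℝ))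
        _ ≤ R + k := add_le_add hxS' (nrm_small hp hk _ hd)
    have hL : {y : Fin k → ℝ | (∑ i, |y i| ^ p) ^ (1 / p) ≤ R - k} ⊆
        ⋃ x ∈ S, cube k x := by
      intro y hy
      simp only [Set.mem_setOf_eq] at hy
      have hd : ∀ i, |((⌊y i⌋ : ℤ) : ℝ) - y i| ≤ 1 := by
        intro i
        have h1 := Int.floor_le (y i)
        have h2 := Int.lt_floor_add_one (y i)
        rw [abs_le]; constructor <;> [linarith; linarith]
      have hmem : (fun i => ⌊y i⌋) ∈ S := by
        show (∑ i, |((⌊y i⌋ : ℤ) : ℝ)| ^ p) ^ (1 / p) ≤ R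
        calc (∑ i, |((⌊y i⌋ : ℤ) : ℝ)| ^ p) ^ (1 / p) ≤
              (∑ i, |y i| ^ p) ^ (1 / p) + (∑ i, |((⌊y i⌋ : ℤ) : ℝ) - y i| ^ p) ^ (1 / p) :=
              nrm_tri hp _ y
          _ ≤ (R - k) + k := add_le_add hy (nrm_small hp hk _ hd)
          _ = R := by ring
      refine Set.mem_biUnion hmem ?_
      intro i _
      exact ⟨Int.floor_le (y i), Int.lt_floor_add_one (y i)⟩
    have hcast : (Nat.card S : ENNReal) = ENNReal.ofReal (Nat.card S : ℝ) :=
      (ENNReal.ofReal_natCast _).symm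
    constructor
    · have h : ENNReal.ofReal ((R - k) ^ k * C) ≤ (Nat.card S : ENNReal) := by
        rw [← hcount, ← hvol (R - k) (by linarith)]
        exact measure_mono hL
      rw [hcast] at h
      exact (ENNReal.ofReal_le_ofReal_iff (Nat.cast_nonneg _)).mp h
    · have h : (Nat.card S : ENNReal) ≤ ENNReal.ofReal ((R + k) ^ k * C) := by
        rw [← hcount, ← hvol (R + k) (by linarith)]
        exact measure_mono hU
      rw [hcast] at h
      exact (ENNReal.ofReal_le_ofReal_iff
        (mul_nonneg (pow_nonneg (by linarith) k) hC0)).mp h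
  have hCeq : (2 * Real.Gamma (1 + 1 / p)) ^ k / Real.Gamma (1 + (k : ℝ) / p) = C := by
    rw [hCdef, add_comm (1 : ℝ) (1 / p), add_comm (1 : ℝ) ((k : ℝ) / p)]
  rw [hCeq]
  have hlow : Tendsto (fun R : ℝ => (R - k) ^ k * C / R ^ k) atTop (nhds C) := by
    have h := (aux_ratio (-(k : ℝ)) k).mul_const C
    rw [one_mul] at h
    refine h.congr fun R => ?_
    rw [div_mul_eq_mul_div, ← sub_eq_add_neg]
  have hupp : Tendsto (fun R : ℝ => (R + k) ^ k * C / R ^ k) atTop (nhds C) := by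
    have h := (aux_ratio ((k : ℝ)) k).mul_const C
    rw [one_mul] at h
    refine h.congr fun R => ?_
    rw [div_mul_eq_mul_div]
  refine tendsto_of_tendsto_of_tendsto_of_le_of_le' hlow hupp ?_ ?_
  · filter_upwards [eventually_ge_atTop ((k : ℝ) + 1)] with R hR
    have hk1 : (k : ℝ) ≤ R := by linarith
    have hRpos : (0 : ℝ) < R := by
      have : (0 : ℝ) ≤ (k : ℝ) := Nat.cast_nonneg k
      linarith
    have h := (key R hk1).1
    gcongr
  · filter_upwards [eventually_ge_atTop ((k : ℝ) + 1)] with R hR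
    have hk1 : (k : ℝ) ≤ R := by linarith
    have hRpos : (0 : ℝ) < R := by
      have : (0 : ℝ) ≤ (k : ℝ) := Nat.cast_nonneg k
      linarith
    have h := (key R hk1).2
    gcongr
end

section
/- Fix an integer k ≥ 1 and a real p ≥ 1, and set R_n = 2^{n/k} · Γ(1 + k/p)^{1/k} / (2·Γ(1 + 1/p)). Then for every real ε > 0 there exists N such that for all integers n ≥ N and every finite set S ⊆ ℤ^k with |S| = 2^n, one has ∑_{s ∈ S} ‖s‖_p^p ≥ (1 − ε) · 2^n · (k/(k + p)) · R_n^p. (This is the rigorous asymptotic form of the statement that the 2^n integer lattice points closest to the origin in p-norm, contained in a ball of radius R, satisfy ∑_{s} ‖s‖_p^p = 2^n · (k/(k+p)) · R^p.) -/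
open Filter Finset

/-- Core Bernoulli-type inequality: `a^r + r·a^(r-1)·(a·z) ≤ (a + a·z)^r`. -/
lemma rpow_bern {a z r : ℝ} (ha : 0 < a) (hz : -1 ≤ z) (hr : 1 ≤ r) :
    a ^ r + r * a ^ (r - 1) * (a * z) ≤ (a + a * z) ^ r := by
  have hb := one_add_mul_self_le_rpow_one_add hz hr
  have h1 : a + a * z = a * (1 + z) := by ring
  have h2 : (a * (1 + z)) ^ r = a ^ r * (1 + z) ^ r :=
    Real.mul_rpow ha.le (by linarith)
  have h3 : a ^ (r - 1) * a = a ^ r := by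
    rw [← Real.rpow_add_one ha.ne' (r - 1)]; ring_nf
  have h4 : a ^ r * (1 + r * z) ≤ a ^ r * (1 + z) ^ r :=
    mul_le_mul_of_nonneg_left hb (Real.rpow_nonneg ha.le r)
  rw [h1, h2]
  have h5 : r * a ^ (r - 1) * (a * z) = a ^ r * (r * z) := by rw [← h3]; ring
  linarith [h4, h5.le, h5.ge]

/-- `(u+δ)^k ≤ u^k + ((1+δ)^k - 1)` for `0 ≤ u ≤ 1`, `0 ≤ δ`. -/
lemma pow_shift_le (k : ℕ) {u δ : ℝ} (hu0 : 0 ≤ u) (hu1 : u ≤ 1) (hδ : 0 ≤ δ) :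
    (u + δ) ^ k ≤ u ^ k + ((1 + δ) ^ k - 1) := by
  induction k with
  | zero => simp
  | succ k ih =>
    have huk : u ^ k ≤ 1 := pow_le_one₀ hu0 hu1
    have hE : (1:ℝ) ≤ (1 + δ) ^ k := one_le_pow₀ (by linarith)
    have h1 : (u + δ) ^ (k+1) = (u + δ) ^ k * (u + δ) := pow_succ _ _
    have h2 : (u + δ) ^ k * (u + δ) ≤ (u ^ k + ((1 + δ) ^ k - 1)) * (u + δ) :=
      mul_le_mul_of_nonneg_right ih (by linarith)
    have h3 : (1 + δ) ^ (k+1) = (1 + δ) ^ k * (1 + δ) := pow_succ _ _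
    have h4 : u ^ (k+1) = u ^ k * u := pow_succ _ _
    nlinarith [h2, pow_nonneg hu0 k]

/-- Telescoping cutoff lemma. -/
lemma tele_le (a : ℕ → ℝ) (h0 : a 0 = 0) (hmono : Monotone a) {w : ℝ} (hw : 0 ≤ w) (m : ℕ) :
    ∑ i ∈ Finset.range m, (if a (i+1) ≤ w then a (i+1) - a i else 0) ≤ min (a m) w := by
  induction m with
  | zero => simp [h0, le_min (le_of_eq rfl) hw]
  | succ m ih =>
    rw [Finset.sum_range_succ]
    have hle : a m ≤ a (m+1) := hmono (Nat.le_succ m)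
    by_cases hc : a (m+1) ≤ w
    · rw [if_pos hc]
      have h1 := min_le_left (a m) w
      exact le_min (by linarith) (by linarith [min_le_right (a m) w])
    · rw [if_neg hc]
      have := min_le_min (hmono (Nat.le_succ m)) (le_refl w)
      linarith [ih, min_le_min hle (le_refl w)]

open MeasureTheory
open scoped ENNReal

/-- `x^p - y^p ≤ p·x^(p-1)·(x-y)` for `0 ≤ y ≤ x`, `x > 0`, `p ≥ 1`. -/
lemma rpow_sub_rpow_le {x y pp : ℝ} (hy : 0 ≤ y) (hxy : y ≤ x) (hx : 0 < x) (hp : 1 ≤ pp) :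
    x ^ pp - y ^ pp ≤ pp * x ^ (pp - 1) * (x - y) := by
  have hz : (-1 : ℝ) ≤ y / x - 1 := by
    have : 0 ≤ y / x := div_nonneg hy hx.le
    linarith
  have hb := rpow_bern hx hz hp
  have e1 : x * (y / x - 1) = y - x := by field_simp
  have e2 : x + x * (y / x - 1) = y := by field_simp; ring
  rw [e1] at hb
  have e2 : x + (y - x) = y := by ring
  rw [e2] at hb
  nlinarith [hb]

/-- Lattice point counting: the number of integer points in the closed `p`-ball of radius `b`
is at most the volume of the `p`-ball of radius `b + k`. -/
lemma count_le (k : ℕ) (hk : 1 ≤ k) {p : ℝ} (hp : 1 ≤ p) (b : ℝ) (hb : 0 ≤ b)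
    (T : Finset (Fin k → ℤ))
    (hT : ∀ s ∈ T, (∑ i, |(s i : ℝ)| ^ p) ^ (1/p) ≤ b) :
    (T.card : ℝ) ≤ (b + k) ^ k *
      ((2 * Real.Gamma (1/p + 1)) ^ k / Real.Gamma (k/p + 1)) := by
  have hp0 : 0 < p := lt_of_lt_of_le one_pos hp
  have hk0 : (0:ℝ) < k := by exact_mod_cast hk
  haveI : Nonempty (Fin k) := Fin.pos_iff_nonempty.mp hk
  set cube : (Fin k → ℤ) → Set (Fin k → ℝ) :=
    fun s => Set.univ.pi fun i => Set.Ico ((s i : ℝ)) (s i + 1) with hcube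
  have hmeas : ∀ s, MeasurableSet (cube s) := fun s =>
    MeasurableSet.pi Set.countable_univ fun i _ => measurableSet_Ico
  have hvol : ∀ s, volume (cube s) = 1 := by
    intro s
    rw [hcube]
    rw [volume_pi_pi]
    simp [Real.volume_Ico]
  -- disjointness
  have hdisj : (↑T : Set (Fin k → ℤ)).PairwiseDisjoint cube := by
    intro s _ t _ hst
    refine Set.disjoint_left.mpr fun x hxs hxt => hst ?_
    funext i
    have h1 := hxs i (Set.mem_univ i)
    have h2 := hxt i (Set.mem_univ i)
    simp only [Set.mem_Ico] at h1 h2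
    have a1 : (s i : ℝ) < t i + 1 := lt_of_le_of_lt h1.1 h2.2
    have a2 : (t i : ℝ) < s i + 1 := lt_of_le_of_lt h2.1 h1.2
    have b1 : s i < t i + 1 := by exact_mod_cast a1
    have b2 : t i < s i + 1 := by exact_mod_cast a2
    omega
  -- inclusion in the ball of radius b + k
  have hsub : (⋃ s ∈ T, cube s) ⊆ {x : Fin k → ℝ | (∑ i, |x i| ^ p) ^ (1/p) ≤ b + k} := by
    rintro x hx
    simp only [Set.mem_iUnion] at hx
    obtain ⟨s, hsT, hxs⟩ := hx
    have hMink := Real.Lp_add_le Finset.univ (fun i => ((s i : ℝ))) (fun i => x i - s i) hp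
    simp only [add_sub_cancel] at hMink
    have hsb := hT s hsT
    have hdiff : (∑ i, |x i - (s i : ℝ)| ^ p) ^ (1/p) ≤ (k : ℝ) := by
      have h1 : ∑ i, |x i - (s i : ℝ)| ^ p ≤ (k : ℝ) := by
        calc ∑ i, |x i - (s i : ℝ)| ^ p ≤ ∑ _i : Fin k, (1:ℝ) := by
              refine Finset.sum_le_sum fun i _ => ?_
              have hi := hxs i (Set.mem_univ i)
              simp only [Set.mem_Ico] at hi
              have : |x i - (s i : ℝ)| ≤ 1 := by
                rw [abs_le]; constructor <;> [linarith [hi.1]; linarith [hi.2]]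
              exact Real.rpow_le_one (abs_nonneg _) this hp0.le
          _ = (k : ℝ) := by simp
      calc (∑ i, |x i - (s i : ℝ)| ^ p) ^ (1/p) ≤ (k : ℝ) ^ (1/p) :=
            Real.rpow_le_rpow (by positivity) h1 (by positivity)
        _ ≤ (k : ℝ) ^ (1:ℝ) := Real.rpow_le_rpow_of_exponent_le (by exact_mod_cast hk)
            (by rw [div_le_one hp0]; linarith)
        _ = (k : ℝ) := Real.rpow_one _
    exact le_trans hMink (add_le_add hsb hdiff)
  -- measure comparison
  have key : (T.card : ℝ≥0∞) ≤ volume {x : Fin k → ℝ | (∑ i, |x i| ^ p) ^ (1/p) ≤ b + k} := by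
    calc (T.card : ℝ≥0∞) = ∑ s ∈ T, volume (cube s) := by simp [hvol]
      _ = volume (⋃ s ∈ T, cube s) :=
          (measure_biUnion_finset hdisj fun s _ => hmeas s).symm
      _ ≤ _ := measure_mono hsub
  rw [MeasureTheory.volume_sum_rpow_le _ hp (b + k), Fintype.card_fin] at key
  have hbk : (0:ℝ) ≤ b + k := by positivity
  have hC : (0:ℝ) ≤ (2 * Real.Gamma (1/p + 1)) ^ k / Real.Gamma (k/p + 1) := by
    have := Real.Gamma_pos_of_pos (show (0:ℝ) < 1/p + 1 by positivity)
    have := Real.Gamma_pos_of_pos (show (0:ℝ) < k/p + 1 by positivity)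
    positivity
  rw [← ENNReal.ofReal_pow hbk, ← ENNReal.ofReal_mul (by positivity),
    ← ENNReal.ofReal_natCast] at key
  exact (ENNReal.ofReal_le_ofReal_iff (by positivity)).mp key

lemma sum_ge (k : ℕ) (hk : 1 ≤ k) {p : ℝ} (hp : 1 ≤ p) (m : ℕ) (hm : 1 ≤ m)
    {R : ℝ} (hR : 0 < R) (S : Finset (Fin k → ℤ))
    (hcard : (S.card : ℝ) = ((2 * Real.Gamma (1/p + 1)) ^ k / Real.Gamma (k/p + 1)) * R ^ k) :
    (S.card : ℝ) * R ^ p *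
        (1 - (p/((k:ℝ)+p)) * (1 + 1/(m:ℝ)) ^ ((k:ℝ)+p) - p * ((1 + (k:ℝ)/R) ^ k - 1))
      ≤ ∑ s ∈ S, ∑ i, |(s i : ℝ)| ^ p := by
  classical
  have hp0 : 0 < p := lt_of_lt_of_le one_pos hp
  have hk0 : (0:ℝ) < k := by exact_mod_cast hk
  have hm0 : (0:ℝ) < m := by exact_mod_cast hm
  have hr0 : (0:ℝ) < (k:ℝ) + p := by linarith
  have hr1 : (1:ℝ) ≤ (k:ℝ) + p := by linarith
  set V : ℝ := (2 * Real.Gamma (1/p + 1)) ^ k / Real.Gamma (k/p + 1) with hVdef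
  have hV : 0 < V := by
    have := Real.Gamma_pos_of_pos (show (0:ℝ) < 1/p + 1 by positivity)
    have := Real.Gamma_pos_of_pos (show (0:ℝ) < (k:ℝ)/p + 1 by positivity)
    positivity
  set M : ℝ := (S.card : ℝ) with hMdef
  have hM0 : 0 ≤ M := Nat.cast_nonneg _
  set w : (Fin k → ℤ) → ℝ := fun s => ∑ i, |(s i : ℝ)| ^ p with hwdef
  have hw0 : ∀ s, 0 ≤ w s := fun s => Finset.sum_nonneg fun i _ => Real.rpow_nonneg (abs_nonneg _) _
  set u : ℕ → ℝ := fun j => (j:ℝ)/(m:ℝ) with hudef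
  set a : ℕ → ℝ := fun j => (u j * R) ^ p with hadef
  set E : ℝ := (1 + (k:ℝ)/R) ^ k - 1 with hEdef
  have hE0 : 0 ≤ E := by
    have : (1:ℝ) ≤ (1 + (k:ℝ)/R) ^ k := one_le_pow₀ (le_add_of_nonneg_right (by positivity))
    simp only [hEdef]; linarith
  set q : ℝ := (k:ℝ) + p - 1 with hqdef
  set A : ℝ := (1 + 1/(m:ℝ)) ^ ((k:ℝ)+p) with hAdef
  have ha0 : a 0 = 0 := by
    simp only [hadef, hudef, Nat.cast_zero, zero_div, zero_mul]
    exact Real.zero_rpow hp0.ne'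
  have hmono : Monotone a := by
    intro i j hij
    apply Real.rpow_le_rpow (by positivity) ?_ hp0.le
    simp only [hudef]
    gcongr
  have ham : a m = R ^ p := by
    simp only [hadef, hudef, div_self hm0.ne', one_mul]
  -- positivity & bounds for u
  have hu_pos : ∀ i, i ∈ Finset.range m → 0 < u (i+1) := by
    intro i _
    simp only [hudef]
    positivity
  have hu_le1 : ∀ i, i ∈ Finset.range m → u (i+1) ≤ 1 := by
    intro i hi
    simp only [hudef]
    rw [div_le_one hm0]
    exact_mod_cast Finset.mem_range.mp hi
  -- Step 1 : slicing lower bound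
  have h1 : ∑ i ∈ Finset.range m,
      ((S.filter fun s => a (i+1) ≤ w s).card : ℝ) * (a (i+1) - a i) ≤ ∑ s ∈ S, w s := by
    calc ∑ i ∈ Finset.range m, ((S.filter fun s => a (i+1) ≤ w s).card : ℝ) * (a (i+1) - a i)
        = ∑ i ∈ Finset.range m, ∑ s ∈ S, (if a (i+1) ≤ w s then a (i+1) - a i else 0) := by
          refine Finset.sum_congr rfl fun i _ => ?_
          rw [Finset.sum_ite, Finset.sum_const, Finset.sum_const_zero, add_zero, nsmul_eq_mul]
      _ = ∑ s ∈ S, ∑ i ∈ Finset.range m, (if a (i+1) ≤ w s then a (i+1) - a i else 0) :=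
          Finset.sum_comm
      _ ≤ ∑ s ∈ S, w s :=
          Finset.sum_le_sum fun s _ =>
            (tele_le a ha0 hmono (hw0 s) m).trans (min_le_right _ _)
  -- Step 2 : cardinality lower bound via lattice point count
  have h2 : ∀ i ∈ Finset.range m,
      M - (u (i+1) * R + k) ^ k * V ≤ ((S.filter fun s => a (i+1) ≤ w s).card : ℝ) := by
    intro i hi
    have hb0 : 0 ≤ u (i+1) * R := (mul_pos (hu_pos i hi) hR).le
    have hcnt := count_le k hk hp (u (i+1) * R) hb0
      (S.filter fun s => ¬ a (i+1) ≤ w s) ?_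
    · have hsplit : ((S.filter fun s => a (i+1) ≤ w s).card : ℝ)
          + ((S.filter fun s => ¬ a (i+1) ≤ w s).card : ℝ) = M := by
        rw [hMdef]
        exact_mod_cast S.card_filter_add_card_filter_not (p := fun s => a (i+1) ≤ w s)
      linarith [hcnt]
    · intro s hs
      rw [Finset.mem_filter] at hs
      have hlt : w s ≤ a (i+1) := le_of_lt (not_le.mp hs.2)
      have : (w s) ^ (1/p) ≤ (a (i+1)) ^ (1/p) :=
        Real.rpow_le_rpow (hw0 s) hlt (by positivity)
      calc (∑ j, |(s j : ℝ)| ^ p) ^ (1/p) = (w s) ^ (1/p) := rfl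
        _ ≤ (a (i+1)) ^ (1/p) := this
        _ = u (i+1) * R := by
            rw [hadef, one_div, Real.rpow_rpow_inv hb0 hp0.ne']
  -- Step 3 : combine
  have h3 : ∑ i ∈ Finset.range m, (M - (u (i+1) * R + k) ^ k * V) * (a (i+1) - a i)
      ≤ ∑ i ∈ Finset.range m,
        ((S.filter fun s => a (i+1) ≤ w s).card : ℝ) * (a (i+1) - a i) :=
    Finset.sum_le_sum fun i hi => mul_le_mul_of_nonneg_right (h2 i hi)
      (sub_nonneg.mpr (hmono (Nat.le_succ i)))
  -- Step 4 : expand the left side of h3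
  have h4 : ∑ i ∈ Finset.range m, (M - (u (i+1) * R + k) ^ k * V) * (a (i+1) - a i)
      = M * R ^ p - V * ∑ i ∈ Finset.range m, (u (i+1) * R + k) ^ k * (a (i+1) - a i) := by
    have e : ∀ i, (M - (u (i+1) * R + k) ^ k * V) * (a (i+1) - a i)
        = M * (a (i+1) - a i) - V * ((u (i+1) * R + k) ^ k * (a (i+1) - a i)) := by
      intro i; ring
    rw [Finset.sum_congr rfl fun i _ => e i, Finset.sum_sub_distrib, ← Finset.mul_sum,
      ← Finset.mul_sum, Finset.sum_range_sub a m, ha0, ham, sub_zero]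
  -- Step 5 : bound G
  have h5 : ∑ i ∈ Finset.range m, (u (i+1) * R + k) ^ k * (a (i+1) - a i)
      ≤ R ^ k * R ^ p * ((p/((k:ℝ)+p)) * A + p * E) := by
    have perterm : ∀ i ∈ Finset.range m, (u (i+1) * R + k) ^ k * (a (i+1) - a i)
        ≤ R ^ k * R ^ p * (p/(m:ℝ)) * (u (i+1) ^ q + E) := by
      intro i hi
      have hu0 := (hu_pos i hi).le
      have hu1 := hu_le1 i hi
      have hΔ0 : 0 ≤ a (i+1) - a i := sub_nonneg.mpr (hmono (Nat.le_succ i))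
      -- bound on the ball factor
      have hbk : (u (i+1) * R + k) ^ k ≤ R ^ k * (u (i+1) ^ k + E) := by
        have e1 : u (i+1) * R + k = R * (u (i+1) + (k:ℝ)/R) := by
          field_simp
        rw [e1, mul_pow]
        exact mul_le_mul_of_nonneg_left (pow_shift_le k hu0 hu1 (by positivity))
          (pow_nonneg hR.le k)
      -- bound on the increment
      have hΔub : a (i+1) - a i ≤ p * (u (i+1) * R) ^ (p-1) * (R/(m:ℝ)) := by
        have hxy : u (i+1) * R - u i * R = R/(m:ℝ) := by
          simp only [hudef]
          push_cast
          field_simp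
          ring
        have hyx : u i * R ≤ u (i+1) * R := by
          apply mul_le_mul_of_nonneg_right ?_ hR.le
          simp only [hudef]
          gcongr
          exact_mod_cast Nat.le_succ i
        have := rpow_sub_rpow_le (x := u (i+1) * R) (y := u i * R)
          (by have : (0:ℝ) ≤ u i := by simp only [hudef]; positivity
              exact mul_nonneg this hR.le)
          hyx (mul_pos (hu_pos i hi) hR) hp
        rw [hxy] at this
        exact this
      -- multiply the two bounds
      have hmul : (u (i+1) * R + k) ^ k * (a (i+1) - a i)
          ≤ (R ^ k * (u (i+1) ^ k + E)) * (p * (u (i+1) * R) ^ (p-1) * (R/(m:ℝ))) := by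
        apply mul_le_mul hbk hΔub hΔ0
        have : (0:ℝ) ≤ u (i+1) ^ k + E := by positivity
        positivity
      refine hmul.trans ?_
      -- simplify the RHS
      have hsplitpow : (u (i+1) * R) ^ (p-1) = u (i+1) ^ (p-1) * R ^ (p-1) :=
        Real.mul_rpow hu0 hR.le
      have hRp : R ^ (p-1) * R = R ^ p := by
        rw [← Real.rpow_add_one hR.ne' (p-1)]; ring_nf
      have huq : u (i+1) ^ (k:ℕ) * u (i+1) ^ (p-1) = u (i+1) ^ q := by
        rw [← Real.rpow_natCast (u (i+1)) k, ← Real.rpow_add (hu_pos i hi)]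
        congr 1
        rw [hqdef]; ring
      have hup1 : u (i+1) ^ (p-1) ≤ 1 :=
        Real.rpow_le_one hu0 hu1 (by linarith)
      have e2 : (R ^ k * (u (i+1) ^ k + E)) * (p * (u (i+1) ^ (p-1) * R ^ (p-1)) * (R/(m:ℝ)))
          = R ^ k * (R ^ (p-1) * R) * (p/(m:ℝ))
            * (u (i+1) ^ k * u (i+1) ^ (p-1) + E * u (i+1) ^ (p-1)) := by
        ring
      rw [hsplitpow, e2, hRp, huq]
      have hEu : E * u (i+1) ^ (p-1) ≤ E :=
        le_trans (mul_le_mul_of_nonneg_left hup1 hE0) (le_of_eq (mul_one E))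
      have hfac : (0:ℝ) ≤ R ^ k * R ^ p * (p/(m:ℝ)) := by positivity
      exact mul_le_mul_of_nonneg_left (by linarith) hfac
    have hsum := Finset.sum_le_sum perterm
    rw [← Finset.mul_sum] at hsum
    refine hsum.trans ?_
    -- now bound ∑ (u(i+1)^q + E)
    have hq0 : (0:ℝ) ≤ q := by rw [hqdef]; linarith
    have hsplit2 : ∑ i ∈ Finset.range m, (u (i+1) ^ q + E)
        = (∑ i ∈ Finset.range m, ((i:ℝ)+1) ^ q) / (m:ℝ) ^ q + (m:ℝ) * E := by
      rw [Finset.sum_add_distrib, Finset.sum_const, Finset.card_range, Finset.sum_div]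
      congr 1
      · refine Finset.sum_congr rfl fun i _ => ?_
        rw [hudef]
        push_cast
        rw [Real.div_rpow (by positivity) hm0.le]
      · rw [nsmul_eq_mul]
    -- Riemann-type bound
    have hsumq : ∑ i ∈ Finset.range m, ((i:ℝ)+1) ^ q ≤ ((m:ℝ)+1) ^ ((k:ℝ)+p) / ((k:ℝ)+p) := by
      have hper : ∀ i ∈ Finset.range m, ((k:ℝ)+p) * ((i:ℝ)+1) ^ q
          ≤ ((i:ℝ)+2) ^ ((k:ℝ)+p) - ((i:ℝ)+1) ^ ((k:ℝ)+p) := by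
        intro i _
        have hia : (0:ℝ) < (i:ℝ)+1 := by positivity
        have hbz := rpow_bern (a := (i:ℝ)+1) (z := 1/((i:ℝ)+1)) hia
          (le_trans (by norm_num : (-1:ℝ) ≤ 0) (by positivity)) hr1
        have e1 : ((i:ℝ)+1) * (1/((i:ℝ)+1)) = 1 := by field_simp
        rw [e1] at hbz
        have e3 : ((k:ℝ)+p) - 1 = q := by rw [hqdef]
        rw [e3] at hbz
        have e4 : ((i:ℝ)+1) + 1 = (i:ℝ)+2 := by ring
        rw [e4] at hbz
        linarith
      have hsum2 := Finset.sum_le_sum hper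
      rw [← Finset.mul_sum] at hsum2
      have htel : ∑ i ∈ Finset.range m, (((i:ℝ)+2) ^ ((k:ℝ)+p) - ((i:ℝ)+1) ^ ((k:ℝ)+p))
          = ((m:ℝ)+1) ^ ((k:ℝ)+p) - 1 := by
        have := Finset.sum_range_sub (fun j => ((j:ℝ)+1) ^ ((k:ℝ)+p)) m
        simp only [Nat.cast_add, Nat.cast_one] at this
        calc ∑ i ∈ Finset.range m, (((i:ℝ)+2) ^ ((k:ℝ)+p) - ((i:ℝ)+1) ^ ((k:ℝ)+p))
            = ∑ i ∈ Finset.range m,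
                (((((i+1:ℕ)):ℝ)+1) ^ ((k:ℝ)+p) - (((i:ℕ):ℝ)+1) ^ ((k:ℝ)+p)) := by
              refine Finset.sum_congr rfl fun i _ => ?_
              congr 2
              push_cast
              ring
          _ = (((m:ℕ):ℝ)+1) ^ ((k:ℝ)+p) - (((0:ℕ):ℝ)+1) ^ ((k:ℝ)+p) :=
              Finset.sum_range_sub (fun j => ((j:ℝ)+1) ^ ((k:ℝ)+p)) m
          _ = ((m:ℝ)+1) ^ ((k:ℝ)+p) - 1 := by
              norm_num
      rw [htel] at hsum2
      rw [le_div_iff₀ hr0]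
      linarith [hsum2]
    -- finish h5
    have hmq : (0:ℝ) < (m:ℝ) ^ q := Real.rpow_pos_of_pos hm0 q
    have hA' : A = ((m:ℝ)+1) ^ ((k:ℝ)+p) / ((m:ℝ) ^ q * (m:ℝ)) := by
      rw [hAdef]
      have e1 : (1 : ℝ) + 1/(m:ℝ) = ((m:ℝ)+1)/(m:ℝ) := by field_simp
      rw [e1, Real.div_rpow (by positivity) hm0.le]
      congr 1
      rw [show (k:ℝ)+p = q+1 by rw [hqdef]; ring, Real.rpow_add hm0, Real.rpow_one]
    calc R ^ k * R ^ p * (p/(m:ℝ)) * ∑ i ∈ Finset.range m, (u (i+1) ^ q + E)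
        ≤ R ^ k * R ^ p * (p/(m:ℝ))
            * ((((m:ℝ)+1) ^ ((k:ℝ)+p) / ((k:ℝ)+p)) / (m:ℝ) ^ q + (m:ℝ) * E) := by
          apply mul_le_mul_of_nonneg_left ?_ (by positivity)
          rw [hsplit2]
          gcongr
      _ = R ^ k * R ^ p * ((p/((k:ℝ)+p)) * A + p * E) := by
          rw [hA']
          field_simp
  -- final assembly
  have hVG : V * ∑ i ∈ Finset.range m, (u (i+1) * R + k) ^ k * (a (i+1) - a i)
      ≤ M * R ^ p * ((p/((k:ℝ)+p)) * A + p * E) := by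
    have h6 := mul_le_mul_of_nonneg_left h5 hV.le
    have e : V * (R ^ k * R ^ p * ((p/((k:ℝ)+p)) * A + p * E))
        = (V * R ^ k) * R ^ p * ((p/((k:ℝ)+p)) * A + p * E) := by ring
    rw [e, ← hcard] at h6
    exact h6
  have efin : M * R ^ p * (1 - (p/((k:ℝ)+p)) * A - p * E)
      = M * R ^ p - M * R ^ p * ((p/((k:ℝ)+p)) * A + p * E) := by ring
  rw [h4] at h3
  linarith [h1, h3, hVG, efin.le, efin.ge]


/-- Asymptotic lower bound: for `R_n = 2^{n/k} · Γ(1 + k/p)^{1/k} / (2·Γ(1 + 1/p))` and any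
`ε > 0`, for all large `n`, every set `S ⊆ ℤ^k` of `2^n` lattice points satisfies
`∑_{s ∈ S} ‖s‖_p^p ≥ (1 − ε) · 2^n · (k/(k + p)) · R_n^p`. -/
theorem sum_pnorm_pow_lower_bound (k : ℕ) (hk : 1 ≤ k) (p : ℝ) (hp : 1 ≤ p)
    (ε : ℝ) (hε : 0 < ε) :
    ∃ N : ℕ, ∀ n : ℕ, N ≤ n → ∀ S : Finset (Fin k → ℤ), S.card = 2 ^ n →
      (1 - ε) * 2 ^ n * ((k : ℝ) / (k + p)) *
          ((2 : ℝ) ^ ((n : ℝ) / k) * Real.Gamma (1 + k / p) ^ ((1 : ℝ) / k) /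
            (2 * Real.Gamma (1 + 1 / p))) ^ p
        ≤ ∑ s ∈ S, ((∑ i, |(s i : ℝ)| ^ p) ^ (1 / p)) ^ p := by
  classical
  have hp0 : 0 < p := lt_of_lt_of_le one_pos hp
  have hk0 : (0:ℝ) < k := by exact_mod_cast hk
  have hr0 : (0:ℝ) < (k:ℝ) + p := by linarith
  set c1 : ℝ := 2 * Real.Gamma (1 + 1/p) with hc1def
  set c2 : ℝ := Real.Gamma (1 + (k:ℝ)/p) with hc2def
  have hc1 : 0 < c1 := by
    have := Real.Gamma_pos_of_pos (show (0:ℝ) < 1 + 1/p by positivity)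
    rw [hc1def]; linarith
  have hc2 : 0 < c2 := Real.Gamma_pos_of_pos (by positivity)
  set Rn : ℕ → ℝ := fun j => 2 ^ ((j:ℝ)/(k:ℝ)) * c2 ^ ((1:ℝ)/(k:ℝ)) / c1 with hRndef
  have hRpos : ∀ j, 0 < Rn j := by
    intro j
    have h2 : (0:ℝ) < 2 ^ ((j:ℝ)/(k:ℝ)) := Real.rpow_pos_of_pos two_pos _
    have hcc : (0:ℝ) < c2 ^ ((1:ℝ)/(k:ℝ)) := Real.rpow_pos_of_pos hc2 _
    exact div_pos (mul_pos h2 hcc) hc1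
  -- volume identity
  have hVRk : ∀ n : ℕ, ((2:ℝ)^n : ℝ)
      = ((2 * Real.Gamma (1/p + 1)) ^ k / Real.Gamma ((k:ℝ)/p + 1)) * Rn n ^ k := by
    intro n
    have hg1 : Real.Gamma (1/p + 1) = Real.Gamma (1 + 1/p) := by rw [add_comm]
    have hg2 : Real.Gamma ((k:ℝ)/p + 1) = Real.Gamma (1 + (k:ℝ)/p) := by rw [add_comm]
    have h2k : ((2:ℝ) ^ ((n:ℝ)/(k:ℝ))) ^ k = 2 ^ n := by
      rw [← Real.rpow_natCast ((2:ℝ) ^ ((n:ℝ)/(k:ℝ))) k,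
        ← Real.rpow_mul (by norm_num : (0:ℝ) ≤ 2), div_mul_cancel₀ _ hk0.ne',
        Real.rpow_natCast]
    have hc2k : (c2 ^ ((1:ℝ)/(k:ℝ))) ^ k = c2 := by
      rw [← Real.rpow_natCast (c2 ^ ((1:ℝ)/(k:ℝ))) k, ← Real.rpow_mul hc2.le,
        one_div, inv_mul_cancel₀ hk0.ne', Real.rpow_one]
    have hRk : Rn n ^ k = 2 ^ n * c2 / c1 ^ k := by
      rw [hRndef]
      rw [div_pow, mul_pow, h2k, hc2k]
    rw [hg1, hg2, ← hc1def, ← hc2def, hRk]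
    field_simp
  -- choice of m
  obtain ⟨m, hm, hA⟩ : ∃ m : ℕ, 1 ≤ m ∧
      (1 + 1/(m:ℝ)) ^ ((k:ℝ)+p) ≤ 1 + ε * k / (2*p) := by
    have t1 : Filter.Tendsto (fun m : ℕ => 1 + 1/(m:ℝ)) Filter.atTop (nhds 1) := by
      simpa using Filter.Tendsto.const_add (1:ℝ) tendsto_one_div_atTop_nhds_zero_nat
    have t2 : ContinuousAt (fun x : ℝ => x ^ ((k:ℝ)+p)) 1 :=
      Real.continuousAt_rpow_const 1 _ (Or.inl one_ne_zero)
    have t3 : Filter.Tendsto (fun m : ℕ => (1 + 1/(m:ℝ)) ^ ((k:ℝ)+p))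
        Filter.atTop (nhds 1) := by
      have := t2.tendsto.comp t1
      simpa [Real.one_rpow, Function.comp_def] using this
    have he1 : (1:ℝ) < 1 + ε * k / (2*p) := by
      have : 0 < ε * k / (2*p) := by positivity
      linarith
    have hev := t3.eventually_le_const he1
    obtain ⟨m, hm1, hm2⟩ := (hev.and (Filter.eventually_ge_atTop 1)).exists
    exact ⟨m, hm2, hm1⟩
  -- choice of N
  have hRtend : Filter.Tendsto Rn Filter.atTop Filter.atTop := by
    have hb : 1 < (2:ℝ) ^ ((1:ℝ)/(k:ℝ)) := by
      rw [Real.one_lt_rpow_iff_of_pos two_pos]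
      exact Or.inl ⟨one_lt_two, by positivity⟩
    have hpow : Filter.Tendsto (fun n : ℕ => ((2:ℝ) ^ ((1:ℝ)/(k:ℝ))) ^ n)
        Filter.atTop Filter.atTop := tendsto_pow_atTop_atTop_of_one_lt hb
    have hC : 0 < c2 ^ ((1:ℝ)/(k:ℝ)) / c1 :=
      div_pos (Real.rpow_pos_of_pos hc2 _) hc1
    have := hpow.atTop_mul_const hC
    refine this.congr fun n => ?_
    rw [← Real.rpow_natCast ((2:ℝ) ^ ((1:ℝ)/(k:ℝ))) n, ← Real.rpow_mul (by norm_num)]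
    rw [hRndef]
    rw [show (1:ℝ)/(k:ℝ) * n = (n:ℝ)/(k:ℝ) by ring]
    ring
  have hEtend : Filter.Tendsto (fun n : ℕ => (1 + (k:ℝ)/Rn n) ^ k)
      Filter.atTop (nhds 1) := by
    have hinv : Filter.Tendsto (fun n : ℕ => (Rn n)⁻¹) Filter.atTop (nhds 0) :=
      hRtend.inv_tendsto_atTop
    have hdiv : Filter.Tendsto (fun n : ℕ => (k:ℝ)/Rn n) Filter.atTop (nhds 0) := by
      have := hinv.const_mul (k:ℝ)
      simpa [div_eq_mul_inv] using this
    have hadd : Filter.Tendsto (fun n : ℕ => 1 + (k:ℝ)/Rn n) Filter.atTop (nhds 1) := by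
      simpa using Filter.Tendsto.const_add (1:ℝ) hdiv
    have := hadd.pow k
    simpa using this
  have he2 : (1:ℝ) < 1 + ε * k / (2*p*((k:ℝ)+p)) := by
    have : 0 < ε * k / (2*p*((k:ℝ)+p)) := by positivity
    linarith
  obtain ⟨N, hN⟩ := Filter.eventually_atTop.mp (hEtend.eventually_le_const he2)
  refine ⟨N, fun n hn S hS => ?_⟩
  -- rewrite the right-hand side
  have hrw : ∑ s ∈ S, ((∑ i, |(s i : ℝ)| ^ p) ^ (1/p)) ^ p
      = ∑ s ∈ S, ∑ i, |(s i : ℝ)| ^ p := by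
    refine Finset.sum_congr rfl fun s _ => ?_
    rw [one_div, Real.rpow_inv_rpow
      (Finset.sum_nonneg fun i _ => Real.rpow_nonneg (abs_nonneg _) _) hp0.ne']
  rw [hrw]
  -- apply the core estimate
  have hcardR : (S.card : ℝ)
      = ((2 * Real.Gamma (1/p + 1)) ^ k / Real.Gamma ((k:ℝ)/p + 1)) * Rn n ^ k := by
    rw [show (S.card : ℝ) = ((2:ℝ)^n) by exact_mod_cast congrArg Nat.cast hS]
    exact hVRk n
  have hcore := sum_ge k hk hp m hm (hRpos n) S hcardR
  have hcard2 : (S.card : ℝ) = (2:ℝ)^n := by exact_mod_cast congrArg Nat.cast hS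
  -- final algebra
  set A : ℝ := (1 + 1/(m:ℝ)) ^ ((k:ℝ)+p) with hAdef
  set E : ℝ := (1 + (k:ℝ)/Rn n) ^ k - 1 with hEdef
  have hEbound : E ≤ ε * k / (2*p*((k:ℝ)+p)) := by
    have := hN n hn
    rw [hEdef]; linarith
  have hE0 : 0 ≤ E := by
    have : (1:ℝ) ≤ (1 + (k:ℝ)/Rn n) ^ k :=
      one_le_pow₀ (le_add_of_nonneg_right (div_nonneg hk0.le (hRpos n).le))
    rw [hEdef]; linarith
  have key1 : (p/((k:ℝ)+p)) * (A - 1) ≤ ε * k / (2*((k:ℝ)+p)) := by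
    have h1 : A - 1 ≤ ε * k / (2*p) := by linarith
    have h2 : (p/((k:ℝ)+p)) * (ε * k / (2*p)) = ε * k / (2*((k:ℝ)+p)) := by
      field_simp
    calc (p/((k:ℝ)+p)) * (A - 1) ≤ (p/((k:ℝ)+p)) * (ε * k / (2*p)) :=
          mul_le_mul_of_nonneg_left h1 (by positivity)
      _ = ε * k / (2*((k:ℝ)+p)) := h2
  have key2 : p * E ≤ ε * k / (2*((k:ℝ)+p)) := by
    have h2 : p * (ε * k / (2*p*((k:ℝ)+p))) = ε * k / (2*((k:ℝ)+p)) := by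
      field_simp
    calc p * E ≤ p * (ε * k / (2*p*((k:ℝ)+p))) :=
          mul_le_mul_of_nonneg_left hEbound hp0.le
      _ = ε * k / (2*((k:ℝ)+p)) := h2
  have final : (1-ε) * ((k:ℝ)/((k:ℝ)+p)) ≤ 1 - (p/((k:ℝ)+p)) * A - p * E := by
    have e1 : (p/((k:ℝ)+p)) * A = (p/((k:ℝ)+p)) * (A - 1) + p/((k:ℝ)+p) := by ring
    have e2 : 1 - p/((k:ℝ)+p) = (k:ℝ)/((k:ℝ)+p) := by field_simp; ring
    have e3 : (1-ε) * ((k:ℝ)/((k:ℝ)+p)) = (k:ℝ)/((k:ℝ)+p) - ε * ((k:ℝ)/((k:ℝ)+p)) := by ring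
    have e4 : ε * ((k:ℝ)/((k:ℝ)+p)) = 2 * (ε * k / (2*((k:ℝ)+p))) := by
      field_simp
    linarith [key1, key2]
  have hfin := mul_le_mul_of_nonneg_right final
    (show (0:ℝ) ≤ (2:ℝ)^n * Rn n ^ p
      from mul_nonneg (by positivity) (Real.rpow_nonneg (hRpos n).le p))
  have hRneq : (2:ℝ) ^ ((n:ℝ)/(k:ℝ)) * c2 ^ ((1:ℝ)/(k:ℝ)) / c1 = Rn n := rfl
  rw [hRneq]
  calc (1 - ε) * 2 ^ n * ((k : ℝ) / ((k:ℝ) + p)) * Rn n ^ p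
      = ((1-ε) * ((k:ℝ)/((k:ℝ)+p))) * ((2:ℝ)^n * Rn n ^ p) := by ring
    _ ≤ (1 - (p/((k:ℝ)+p)) * A - p * E) * ((2:ℝ)^n * Rn n ^ p) := hfin
    _ = (S.card : ℝ) * Rn n ^ p * (1 - (p/((k:ℝ)+p)) * A - p * E) := by
        rw [hcard2]; ring
    _ ≤ ∑ s ∈ S, ∑ i, |(s i : ℝ)| ^ p := hcore
end
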